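/- arXiv:2209.09334 — 8 statements merged into one kernel-verified Lean document; each statement's English description precedes it below -/
import Mathlib

section
/- For every pair of positive integers a and b, the equation a·x + b·y = z² is 2-Ramsey. -/
/-!
Write `c = α + β`. Scaling by `γ = α β c`, every triple `(β σ, α w, k)` with `σ + w = c k²` gives
the solution `(γ β σ, γ α w, γ k)` of `α x + β y = z²`, so it suffices to show that no 2-colouring
`h` avoids monochromatic triples of this shape with `k ≥ K`. Suppose `h` does.

Taking `σ = α k²`, `w = β k²` gives `h (α β k²) ≠ h k`, so `h` changes colour infinitely often.
If `h x ≠ h y`, the triples `(σ, w, x)` and `(σ + c (y² - x²), w, y)` share `w`, which forces the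
colour `h x` at `β σ` to survive the shift `σ ↦ σ + c (y² - x²)`. A colour change at `p` followed
by a run `(p, b]` with `b ≪ p²` thus gives shifts by `c (2p+1)` in one direction and by
`c (2b+1)`, `c · 4b` in the other; a bounded walk combining them moves by exactly `c`, so
`σ ↦ h (β σ)` is `c`-periodic on a long interval, against `h (α β k²) ≠ h k`. Otherwise runs grow
quadratically, and two consecutive long runs contain a monochromatic triple with `σ = μ`, `k = β μ`.
-/

namespace MonochromaticSquare

theorem eq_of_ne_of_ne {x y z : Fin 2} (hx : x ≠ z) (hy : y ≠ z) : x = y := by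
  omega

-- Greedily step down by `t` when the position is at least `L + t`, and up otherwise; the position
-- then never leaves `[L, L + t + u₁ + u₂]`.
theorem bounded_walk {P : ℕ → Prop} {L u₁ u₂ t : ℕ}
    (hu₁ : ∀ q, L ≤ q → q ≤ L + t → P q → P (q + u₁))
    (hu₂ : ∀ q, L ≤ q → q ≤ L + t → P q → P (q + u₂))
    (ht : ∀ q, L ≤ q → q ≤ L + u₁ + u₂ → P (q + t) → P q)
    {A₁ A₂ B q m : ℕ} (hqm : q + A₁ * u₁ + A₂ * u₂ = m + B * t)
    (hLq : L ≤ q) (hqL : q ≤ L + t + u₁ + u₂) (hLm : L ≤ m) (hmL : m ≤ L + t) (hq : P q) :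
    P m := by
  obtain ⟨n, hn⟩ : ∃ n, A₁ + A₂ + B = n := ⟨_, rfl⟩
  induction n generalizing A₁ A₂ B q with
  | zero =>
    obtain ⟨rfl, rfl, rfl⟩ : A₁ = 0 ∧ A₂ = 0 ∧ B = 0 := by omega
    simp only [zero_mul, add_zero] at hqm
    exact hqm ▸ hq
  | succ n ih =>
    by_cases hdown : 0 < B ∧ L + t ≤ q
    · obtain ⟨B, rfl⟩ : ∃ B', B = B' + 1 := ⟨B - 1, by omega⟩
      obtain ⟨q, rfl⟩ : ∃ q', q = q' + t := ⟨q - t, by omega⟩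
      rw [add_one_mul] at hqm
      exact ih (A₁ := A₁) (A₂ := A₂) (B := B) (by omega) (by omega) (by omega)
        (ht q (by omega) (by omega) hq) (by omega)
    have hqt : q ≤ L + t := by
      rcases Nat.eq_zero_or_pos B with rfl | hB
      · rw [zero_mul] at hqm
        omega
      · omega
    rcases Nat.eq_zero_or_pos A₁ with rfl | hA₁
    · rcases Nat.eq_zero_or_pos A₂ with rfl | hA₂
      · rcases Nat.eq_zero_or_pos B with rfl | hB
        · omega
        · have : t ≤ B * t := Nat.le_mul_of_pos_left t hB
          omega
      · obtain ⟨A₂, rfl⟩ : ∃ A₂', A₂ = A₂' + 1 := ⟨A₂ - 1, by omega⟩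
        rw [add_one_mul] at hqm
        exact ih (A₁ := 0) (A₂ := A₂) (B := B) (q := q + u₂) (by omega) (by omega) (by omega)
          (hu₂ q hLq hqt hq) (by omega)
    · obtain ⟨A₁, rfl⟩ : ∃ A₁', A₁ = A₁' + 1 := ⟨A₁ - 1, by omega⟩
      rw [add_one_mul] at hqm
      exact ih (A₁ := A₁) (A₂ := A₂) (B := B) (q := q + u₁) (by omega) (by omega) (by omega)
        (hu₁ q hLq hqt hq) (by omega)

theorem apply_add_eq_of_shifts {f : ℕ → Fin 2} {X : Fin 2} {d t u₁ u₂ W : ℕ}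
    (hu₁ : ∀ σ, 0 < σ → σ < W → f σ = X → f (σ + d * u₁) = X)
    (hu₂ : ∀ σ, 0 < σ → σ < W → f σ = X → f (σ + d * u₂) = X)
    (ht : ∀ σ, 0 < σ → σ < W → f (σ + d * t) = X → f σ = X)
    (hfwd : ∃ A₁ A₂ B, A₁ * u₁ + A₂ * u₂ = 1 + B * t)
    (hbwd : ∃ A₁ A₂ B, 1 + A₁ * u₁ + A₂ * u₂ = B * t)
    {n : ℕ} (hn : 0 < n) (hnW : n + d * (t + u₁ + u₂) < W) : f (n + d) = f n := by
  obtain ⟨A₁, A₂, B, hf⟩ := hfwd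
  obtain ⟨A₁', A₂', B', hb⟩ := hbwd
  have hdt : d ≤ d * t := Nat.le_mul_of_pos_right d (Nat.pos_of_ne_zero (by rintro rfl; omega))
  rw [mul_add, mul_add] at hnW
  have step {A₁ A₂ B q m : ℕ} (hqm : q + A₁ * (d * u₁) + A₂ * (d * u₂) = m + B * (d * t))
      (hq : n ≤ q) (hq' : q ≤ n + d * t + d * u₁ + d * u₂) (hm : n ≤ m) (hm' : m ≤ n + d * t) :
      f q = X → f m = X :=
    bounded_walk (P := fun σ => f σ = X) (fun q h₁ h₂ => hu₁ q (by omega) (by omega))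
      (fun q h₁ h₂ => hu₂ q (by omega) (by omega)) (fun q h₁ h₂ => ht q (by omega) (by omega))
      hqm hq hq' hm hm'
  have fwd : f n = X → f (n + d) = X := by
    refine step (A₁ := A₁) (A₂ := A₂) (B := B) ?_ le_rfl (by omega) (by omega) (by omega)
    calc n + A₁ * (d * u₁) + A₂ * (d * u₂) = n + d * (A₁ * u₁ + A₂ * u₂) := by ring
      _ = n + d + B * (d * t) := by rw [hf]; ring
  have bwd : f (n + d) = X → f n = X := by
    refine step (A₁ := A₁') (A₂ := A₂') (B := B') ?_ (by omega) (by omega) le_rfl (by omega)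
    calc n + d + A₁' * (d * u₁) + A₂' * (d * u₂) = n + d * (1 + A₁' * u₁ + A₂' * u₂) := by ring
      _ = n + B' * (d * t) := by rw [hb]; ring
  by_cases hX : f n = X
  · rw [hX, fwd hX]
  · exact eq_of_ne_of_ne (mt bwd hX) hX

theorem exists_run {h : ℕ → Fin 2} (hinf : ∀ N, ∃ p, N ≤ p ∧ h p ≠ h (p + 1)) (p : ℕ) :
    ∃ b, p < b ∧ (∀ j, p < j → j ≤ b → h j = h b) ∧ h (b + 1) ≠ h b := by
  classical
  have hex : ∃ b, p < b ∧ h b ≠ h (b + 1) := hinf (p + 1)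
  obtain ⟨hpb, hend⟩ := Nat.find_spec hex
  have hrun : ∀ j, p < j → j ≤ Nat.find hex → h j = h (p + 1) := by
    intro j hj
    induction j, hj using Nat.le_induction with
    | base => exact fun _ => rfl
    | succ j hj ih =>
      intro hjb
      have hj' : h j = h (j + 1) :=
        not_not.1 fun hne => Nat.find_min hex (show j < Nat.find hex by omega) ⟨hj, hne⟩
      exact hj'.symm.trans (ih (by omega))
  refine ⟨Nat.find hex, hpb, fun j hj hjb => ?_, Ne.symm hend⟩
  rw [hrun j hj hjb, hrun _ hpb le_rfl]

def MonoFree (α β K : ℕ) (h : ℕ → Fin 2) : Prop :=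
  ∀ ⦃k σ w⦄, K ≤ k → 0 < σ → 0 < w → σ + w = (α + β) * k ^ 2 → h (β * σ) = h k →
    h (α * w) ≠ h k

namespace MonoFree

variable {α β K : ℕ} {h : ℕ → Fin 2}

theorem sq_ne (hα : 0 < α) (hβ : 0 < β) (H : MonoFree α β K h) {k : ℕ} (hk : K ≤ k)
    (hk₀ : 0 < k) : h (β * (α * k ^ 2)) ≠ h k := fun hc =>
  H (σ := α * k ^ 2) (w := β * k ^ 2) hk (by positivity) (by positivity) (by ring) hc
    (by rw [show α * (β * k ^ 2) = β * (α * k ^ 2) by ring, hc])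

theorem shift (H : MonoFree α β K h) {x y d σ : ℕ} (hx : K ≤ x) (hy : K ≤ y) (hxy : h x ≠ h y)
    (hd : x ^ 2 + d = y ^ 2) (hσ : 0 < σ) (hσx : σ < (α + β) * x ^ 2)
    (hσc : h (β * σ) = h x) : h (β * (σ + (α + β) * d)) = h x := by
  obtain ⟨w, hw⟩ := Nat.exists_eq_add_of_lt hσx
  have hwc : h (α * (w + 1)) = h y := eq_of_ne_of_ne (H hx hσ w.succ_pos (by omega) hσc) hxy.symm
  by_contra hne
  refine H hy (by omega) w.succ_pos ?_ (eq_of_ne_of_ne hne hxy.symm) hwc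
  rw [← hd, mul_add]
  omega

theorem unshift (H : MonoFree α β K h) {x y d σ : ℕ} (hx : K ≤ x) (hy : K ≤ y)
    (hxy : h x ≠ h y) (hd : x ^ 2 + d = y ^ 2) (hσ : 0 < σ) (hσx : σ < (α + β) * x ^ 2)
    (hσc : h (β * (σ + (α + β) * d)) = h y) : h (β * σ) = h y := by
  by_contra hne
  exact hxy ((H.shift hx hy hxy hd hσ hσx (eq_of_ne_of_ne hne hxy)).symm.trans hσc)

theorem exists_change (hα : 0 < α) (hβ : 0 < β) (H : MonoFree α β K h) (N : ℕ) :
    ∃ p, N ≤ p ∧ h p ≠ h (p + 1) := by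
  by_contra! hconst
  have hN : ∀ j, N ≤ j → h j = h N := fun j hj => by
    induction j, hj using Nat.le_induction with
    | base => rfl
    | succ j hj ih => rw [← hconst j hj, ih]
  have hk : N + K + 1 ≤ β * (α * (N + K + 1) ^ 2) :=
    calc N + K + 1 ≤ (N + K + 1) ^ 2 := Nat.le_self_pow two_ne_zero _
      _ ≤ α * (N + K + 1) ^ 2 := Nat.le_mul_of_pos_left _ hα
      _ ≤ β * (α * (N + K + 1) ^ 2) := Nat.le_mul_of_pos_left _ hβ
  exact H.sq_ne hα hβ (k := N + K + 1) (by omega) (by omega)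
    (by rw [hN _ (by omega), hN (N + K + 1) (by omega)])

theorem false_of_shifts (hα : 0 < α) (hβ : 0 < β) (H : MonoFree α β K h) {X : Fin 2}
    {t u₁ u₂ W : ℕ}
    (hu₁ : ∀ σ, 0 < σ → σ < W → h (β * σ) = X → h (β * (σ + (α + β) * u₁)) = X)
    (hu₂ : ∀ σ, 0 < σ → σ < W → h (β * σ) = X → h (β * (σ + (α + β) * u₂)) = X)
    (ht : ∀ σ, 0 < σ → σ < W → h (β * (σ + (α + β) * t)) = X → h (β * σ) = X)
    (hfwd : ∃ A₁ A₂ B, A₁ * u₁ + A₂ * u₂ = 1 + B * t)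
    (hbwd : ∃ A₁ A₂ B, 1 + A₁ * u₁ + A₂ * u₂ = B * t)
    (hW : (α + β) * (α * β ^ 2 * (α + β) * (K + 1) ^ 2 + t + u₁ + u₂) < W) : False := by
  set c := α + β
  set M := α * β ^ 2 * c * (K + 1) ^ 2
  have hstep : ∀ i, K + 1 ≤ i → i < M → h (β * (c * (i + 1))) = h (β * (c * i)) := by
    intro i hi hiM
    have hiW : c * i + c * (t + u₁ + u₂) < W := by
      calc c * i + c * (t + u₁ + u₂) = c * (i + t + u₁ + u₂) := by ring
        _ ≤ c * (M + t + u₁ + u₂) := by gcongr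
        _ < W := hW
    simpa only [mul_add, mul_one] using apply_add_eq_of_shifts (f := fun σ => h (β * σ))
      hu₁ hu₂ ht hfwd hbwd (Nat.mul_pos (by omega) (by omega)) hiW
  have hconst : ∀ i, K + 1 ≤ i → i ≤ M → h (β * (c * i)) = h (β * (c * (K + 1))) := by
    intro i hi
    induction i, hi using Nat.le_induction with
    | base => exact fun _ => rfl
    | succ i hi ih => exact fun hiM => (hstep i hi (by omega)).trans (ih (by omega))
  have hKM : K + 1 ≤ M :=
    calc K + 1 ≤ (K + 1) ^ 2 := Nat.le_self_pow two_ne_zero _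
      _ ≤ M := Nat.le_mul_of_pos_left _ (by positivity)
  refine H.sq_ne hα hβ (k := β * (c * (K + 1))) ?_ (by positivity) ?_
  · calc K ≤ 1 * (1 * (K + 1)) := by omega
      _ ≤ β * (c * (K + 1)) := by gcongr <;> omega
  · rw [show β * (α * (β * (c * (K + 1))) ^ 2) = β * (c * M) by ring]
    exact hconst M hKM le_rfl

theorem false_of_short_run (hα : 0 < α) (hβ : 0 < β) (H : MonoFree α β K h) {p b : ℕ}
    (hp : α * β ^ 2 * (α + β) * (K + 1) ^ 2 + 16 ≤ p) (hpb : p < b) (hb : 16 * b ≤ p ^ 2)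
    (hchange : h p ≠ h (p + 1)) (hrun : ∀ j, p < j → j ≤ b → h j = h b)
    (hend : h (b + 1) ≠ h b) : False := by
  set c := α + β
  have hKp : K ≤ p := by
    have := Nat.le_mul_of_pos_left ((K + 1) ^ 2) (show 0 < α * β ^ 2 * c by positivity)
    have := Nat.le_self_pow two_ne_zero (K + 1)
    omega
  have hcp : ∀ x, p ≤ x → c * p ^ 2 ≤ c * x ^ 2 := fun x hx => by gcongr
  have hu₁ : ∀ σ, 0 < σ → σ < c * p ^ 2 → h (β * σ) = h b →
      h (β * (σ + c * (2 * b + 1))) = h b := fun σ hσ hσW =>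
    H.shift (by omega) (by omega) hend.symm (by ring) hσ (hσW.trans_le (hcp b hpb.le))
  have ht : ∀ σ, 0 < σ → σ < c * p ^ 2 → h (β * (σ + c * (2 * p + 1))) = h b →
      h (β * σ) = h b := by
    rw [← hrun (p + 1) (by omega) (by omega)]
    exact fun σ hσ hσW => H.unshift hKp (by omega) hchange (by ring) hσ hσW
  have hW :
      c * (α * β ^ 2 * c * (K + 1) ^ 2 + (2 * p + 1) + (2 * b + 1) + 4 * b) < c * p ^ 2 := by
    gcongr
    nlinarith
  -- `2b + 1` and `2p + 1` need not be coprime: a second upward shift, by `4b`, is needed unless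
  -- `b = p + 1`; the coefficients below come from `(2b + 1)² = 1 + 4b (b + 1)`.
  rcases (show b = p + 1 ∨ p + 2 ≤ b by omega) with rfl | hpb₂
  · refine H.false_of_shifts hα hβ hu₁ hu₁ ht ⟨p + 1, 0, p + 2, by ring⟩ ⟨p, 0, p + 1, by ring⟩
      (hW.trans_le' (by gcongr; omega))
  · obtain ⟨e, rfl⟩ : ∃ e, b = e + 1 := ⟨b - 1, by omega⟩
    have hu₂ : ∀ σ, 0 < σ → σ < c * p ^ 2 → h (β * σ) = h (e + 1) →
        h (β * (σ + c * (4 * (e + 1)))) = h (e + 1) := by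
      rw [← hrun e (by omega) (by omega)]
      refine fun σ hσ hσW => H.shift (y := e + 2) (by omega) (by omega) ?_ (by ring) hσ
        (hσW.trans_le (hcp e (by omega)))
      rw [hrun e (by omega) (by omega)]
      exact hend.symm
    exact H.false_of_shifts hα hβ hu₁ hu₂ ht
      ⟨2 * e + 3, 2 * p * (e + 2), 4 * (e + 1) * (e + 2), by ring⟩
      ⟨2 * p * (2 * e + 3), e + 2, (2 * e + 3) ^ 2, by ring⟩ hW

theorem false_of_long_runs (hα : 0 < α) (hβ : 0 < β) (H : MonoFree α β K h) {a b b' : ℕ}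
    (hab : 2 * a ≤ b) (hb : α * β ^ 3 * (K + 4 * β + 4) ^ 2 ≤ b) (hbb' : (α + β) * b ≤ b')
    (hfirst : ∀ j, a ≤ j → j ≤ b → h j = h b) (hsecond : ∀ j, b < j → j ≤ b' → h j ≠ h b) :
    False := by
  -- The triple is `(β μ, α w, β μ)` with `α β³ μ² ∈ [a, b]`, so that `h (β μ) ≠ h b` by `sq_ne`,
  -- and `α w ∈ (b, b']`.
  set M := α * β ^ 3
  have hM : 0 < M := by positivity
  obtain ⟨μ, hμb, hbμ⟩ : ∃ μ, M * μ ^ 2 ≤ b ∧ b < M * (μ + 1) ^ 2 := by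
    refine ⟨Nat.sqrt (b / M), (Nat.mul_le_mul_left M (Nat.sqrt_le' _)).trans (Nat.mul_div_le b M),
      (Nat.lt_mul_div_succ b hM).trans_le (Nat.mul_le_mul_left M (Nat.lt_succ_sqrt' _))⟩
  have hμ : K + 4 * β + 4 ≤ μ := by
    have := Nat.lt_of_mul_lt_mul_left (hb.trans_lt hbμ)
    have := lt_of_pow_lt_pow_left₀ 2 (Nat.zero_le _) this
    omega
  have hμβ : μ ≤ β * μ := Nat.le_mul_of_pos_left μ hβ
  obtain ⟨w, hw⟩ : ∃ w, (α + β) * (β * μ) ^ 2 = μ + w := by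
    refine Nat.exists_eq_add_of_le (hμβ.trans ((Nat.le_self_pow two_ne_zero _).trans ?_))
    exact Nat.le_mul_of_pos_left _ (by omega)
  have hw_eq : β * (α * w) + α * β * μ = (α + β) * (M * μ ^ 2) := by
    rw [show (α + β) * (M * μ ^ 2) = α * β * ((α + β) * (β * μ) ^ 2) by ring, hw]
    ring
  have hmargin : β ^ 3 * (2 * μ + 1) + μ ≤ α * β ^ 2 * μ * μ := by
    have h₁ : β ^ 2 * μ * (4 * β + 4) ≤ β ^ 2 * μ * μ := Nat.mul_le_mul_left _ (by omega)
    have h₂ : β ^ 2 * μ * μ ≤ α * (β ^ 2 * μ * μ) := Nat.le_mul_of_pos_left _ hα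
    nlinarith
  have hkey : β * (M * (μ + 1) ^ 2) + α * β * μ ≤ (α + β) * (M * μ ^ 2) :=
    calc β * (M * (μ + 1) ^ 2) + α * β * μ
        = β * (M * μ ^ 2) + α * β * (β ^ 3 * (2 * μ + 1) + μ) := by ring
      _ ≤ β * (M * μ ^ 2) + α * β * (α * β ^ 2 * μ * μ) := by gcongr
      _ = (α + β) * (M * μ ^ 2) := by ring
  have hw_low : b < α * w := by
    have := Nat.mul_lt_mul_of_pos_left hbμ hβ
    exact Nat.lt_of_mul_lt_mul_left (a := β) (by omega)
  have hw_high : α * w ≤ b' :=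
    calc α * w ≤ β * (α * w) := Nat.le_mul_of_pos_left _ hβ
      _ ≤ (α + β) * (M * μ ^ 2) := by omega
      _ ≤ (α + β) * b := by gcongr
      _ ≤ b' := hbb'
  have ha : a ≤ M * μ ^ 2 := by
    have : M * (μ + 1) ^ 2 ≤ M * (2 * μ ^ 2) := Nat.mul_le_mul_left M (by nlinarith)
    rw [mul_left_comm] at this
    omega
  have hk : h (β * μ) ≠ h b := by
    have := H.sq_ne hα hβ (k := β * μ) (by omega) (Nat.mul_pos hβ (by omega))
    rwa [show β * (α * (β * μ) ^ 2) = M * μ ^ 2 by ring, hfirst _ ha hμb, ne_comm] at this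
  have hw₀ : 0 < w := Nat.pos_of_ne_zero (by rintro rfl; simp at hw_low)
  exact H (k := β * μ) (by omega) (by omega) hw₀ hw.symm rfl
    (eq_of_ne_of_ne (hsecond _ hw_low hw_high) hk)

end MonoFree

theorem not_monoFree {α β K : ℕ} {h : ℕ → Fin 2} (hα : 0 < α) (hβ : 0 < β) :
    ¬MonoFree α β K h := by
  intro H
  obtain ⟨p, hp, hchange⟩ := H.exists_change hα hβ
    (α * β ^ 3 * (K + 4 * β + 4) ^ 2 + α * β ^ 2 * (α + β) * (K + 1) ^ 2 + 16 * (α + β) + 40)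
  obtain ⟨b, hpb, hrun₁, hend₁⟩ := exists_run (H.exists_change hα hβ) p
  by_cases hshort₁ : 16 * b ≤ p ^ 2
  · exact H.false_of_short_run hα hβ (by omega) hpb hshort₁ hchange hrun₁ hend₁
  obtain ⟨b', hbb', hrun₂, hend₂⟩ := exists_run (H.exists_change hα hβ) b
  by_cases hshort₂ : 16 * b' ≤ b ^ 2
  · exact H.false_of_short_run hα hβ (by omega) hbb' hshort₂ hend₁.symm hrun₂ hend₂
  have hp₂ : 40 * p ≤ p ^ 2 := by rw [sq]; exact Nat.mul_le_mul_right p (by omega)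
  have hb₂ : 16 * ((α + β) * b) ≤ b ^ 2 := by
    rw [sq, ← mul_assoc]
    exact Nat.mul_le_mul_right b (by omega)
  refine H.false_of_long_runs hα hβ (a := p + 1) (b' := b') (by omega) (by omega) (by omega)
    (fun j hj => hrun₁ j hj) (fun j hj hjb => ?_)
  rw [hrun₂ j hj hjb, ← hrun₂ (b + 1) (by omega) (by omega)]
  exact hend₁

theorem exists_monochromatic {α β : ℕ} (hα : 0 < α) (hβ : 0 < β) (h : ℕ → Fin 2) (K : ℕ) :
    ∃ k σ w, K ≤ k ∧ 0 < σ ∧ 0 < w ∧ σ + w = (α + β) * k ^ 2 ∧ h (β * σ) = h k ∧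
      h (α * w) = h k := by
  by_contra! H
  exact not_monoFree hα hβ H

end MonochromaticSquare

open MonochromaticSquare in
/-- For every pair of positive integers `a` and `b`, the equation
`a·x + b·y = z²` is 2-Ramsey. -/
theorem stmt_6 (a b : ℕ) (ha : 0 < a) (hb : 0 < b) :
    ∀ φ : ℕ → Fin 2,
      {w : ℕ × ℕ × ℕ | 0 < w.1 ∧ 0 < w.2.1 ∧ 0 < w.2.2 ∧
        φ w.1 = φ w.2.1 ∧ φ w.1 = φ w.2.2 ∧
        a * w.1 + b * w.2.1 = w.2.2 ^ 2}.Infinite := by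
  intro φ
  set γ := a * b * (a + b) with hγ
  refine Set.Infinite.of_image (fun w => w.2.2) (Set.infinite_of_forall_exists_gt fun N => ?_)
  obtain ⟨k, σ, w, hk, hσ, hw, hsum, hσc, hwc⟩ :=
    exists_monochromatic ha hb (fun n => φ (γ * n)) (N + 1)
  have hγk : N < γ * k := by nlinarith [show 0 < γ by positivity]
  refine ⟨γ * k, ⟨(γ * (b * σ), γ * (a * w), γ * k), ⟨by positivity, by positivity,
    (Nat.zero_le N).trans_lt hγk, hσc.trans hwc.symm, hσc, ?_⟩, rfl⟩, hγk⟩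
  calc a * (γ * (b * σ)) + b * (γ * (a * w)) = γ * (a * b) * (σ + w) := by ring
    _ = (γ * k) ^ 2 := by rw [hsum, hγ]; ring
end

section
/- Let p ∈ ℤ[z] be a polynomial of degree at least 2 with positive leading coefficient, and let a, b be positive integers with gcd(a,b) = 1. Let d ≥ 1 be an integer and t an integer such that (a+b)·t ≡ p(t) (mod d). Then for every positive integer K there exist positive integers x, y, z with a·x + b·y = p(z), x, y, z ≥ K, and x ≡ y ≡ z ≡ t (mod d). -/
/-!
Choose `z ≡ t (mod d)` so large that `p(z) - (a+b)t = d M` with `M` large (`p` grows to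
infinity, and `d ∣ p(z) - p(t)`). Since `a, b` are coprime, every large `M` is `a u + b v` with
`u, v` large, and then `x = t + d u`, `y = t + d v` satisfy `a x + b y = (a+b)t + d M = p(z)`.
-/

open Filter Polynomial

theorem Polynomial.tendsto_eval_intCast_atTop (p : ℤ[X]) (hdeg : 0 < p.degree)
    (hlead : 0 ≤ p.leadingCoeff) : Tendsto (fun z : ℤ => p.eval z) atTop atTop := by
  have hinj : Function.Injective (Int.castRingHom ℚ) := Int.cast_injective
  set q : ℚ[X] := p.map (Int.castRingHom ℚ)
  have hq : Tendsto (fun x : ℚ => q.eval x) atTop atTop := by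
    refine q.tendsto_atTop_of_leadingCoeff_nonneg ?_ ?_
    · rwa [degree_map_eq_of_injective hinj]
    · rw [leadingCoeff_map_of_injective hinj]
      simpa using hlead
  rw [← tendsto_intCast_atTop_iff (R := ℚ)]
  convert hq.comp (tendsto_intCast_atTop_atTop (R := ℚ)) using 2 with z
  simp [q, eval_map]

theorem Int.exists_dvd_sub_le_of_tendsto_atTop {f : ℤ → ℤ} (hf : Tendsto f atTop atTop)
    {d : ℤ} (hd : 0 < d) (t K N : ℤ) : ∃ z, d ∣ z - t ∧ K ≤ z ∧ N ≤ f z := by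
  have hprog : Tendsto (fun m : ℤ => t + d * m) atTop atTop :=
    tendsto_atTop_add_const_left atTop t (tendsto_id.const_mul_atTop' hd)
  obtain ⟨m, hKm, hNm⟩ :=
    ((hprog.eventually_ge_atTop K).and ((hf.comp hprog).eventually_ge_atTop N)).exists
  exact ⟨t + d * m, ⟨m, by ring⟩, hKm, hNm⟩

theorem IsCoprime.exists_nonneg_mul_add_mul_eq {a b M : ℤ} (hab : IsCoprime a b) (ha : 0 < a)
    (hb : 0 < b) (hM : a * b ≤ M) : ∃ u v, 0 ≤ u ∧ 0 ≤ v ∧ a * u + b * v = M := by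
  obtain ⟨r, s, hrs⟩ := hab
  -- `u ≡ M r (mod b)` makes `a u ≡ M (mod b)`; `u < b` then forces `b v = M - a u > 0`.
  set u := M * r % b
  have hu : 0 ≤ u := Int.emod_nonneg _ hb.ne'
  have hub : u < b := Int.emod_lt_of_pos _ hb
  obtain ⟨v, hv⟩ : b ∣ M - a * u :=
    ⟨M * s + a * (M * r / b), by
      rw [show u = M * r - b * (M * r / b) from Int.emod_def _ _]
      linear_combination -M * hrs⟩
  have hbv : 0 ≤ b * v := by nlinarith
  exact ⟨u, v, hu, nonneg_of_mul_nonneg_right hbv hb, by linarith⟩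

theorem IsCoprime.exists_le_mul_add_mul_eq {a b L M : ℤ} (hab : IsCoprime a b) (ha : 0 < a)
    (hb : 0 < b) (hM : (a + b) * L + a * b ≤ M) :
    ∃ u v, L ≤ u ∧ L ≤ v ∧ a * u + b * v = M := by
  obtain ⟨u, v, hu, hv, huv⟩ :=
    hab.exists_nonneg_mul_add_mul_eq (M := M - (a + b) * L) ha hb (by linarith)
  exact ⟨L + u, L + v, by linarith, by linarith, by linear_combination huv⟩

/-- **Lemma: large solutions in a residue class.** Let `p ∈ ℤ[z]` have degree at
least 2 and positive leading coefficient, and let `a, b` be positive coprime integers. Let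
`d ≥ 1` and `t` be integers with `(a+b)·t ≡ p(t) (mod d)`. Then for every positive integer `K`
there exist positive integers `x, y, z ≥ K`, all congruent to `t` mod `d`, with
`a·x + b·y = p(z)`. -/
theorem stmt_7 (p : Polynomial ℤ) (hdeg : 2 ≤ p.natDegree) (hlead : 0 < p.leadingCoeff)
    (a b : ℤ) (ha : 0 < a) (hb : 0 < b) (hab : IsCoprime a b)
    (d : ℤ) (hd : 1 ≤ d) (t : ℤ) (ht : d ∣ p.eval t - (a + b) * t) :
    ∀ K : ℤ, 0 < K → ∃ x y z : ℤ, 0 < x ∧ 0 < y ∧ 0 < z ∧ K ≤ x ∧ K ≤ y ∧ K ≤ z ∧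
      a * x + b * y = p.eval z ∧ d ∣ x - t ∧ d ∣ y - t ∧ d ∣ z - t := by
  intro K hK
  have hd0 : 0 < d := by omega
  -- `u ≥ L` guarantees `t + d u ≥ t + u ≥ K`.
  set L := K + |t|
  have hL : 0 ≤ L := by positivity
  have hgrowth := p.tendsto_eval_intCast_atTop (natDegree_pos_iff_degree_pos.mp (by omega))
    hlead.le
  obtain ⟨z, hzt, hKz, hz⟩ := Int.exists_dvd_sub_le_of_tendsto_atTop hgrowth hd0 t K
    (d * ((a + b) * L + a * b) + (a + b) * t)
  obtain ⟨M, hM⟩ : d ∣ p.eval z - (a + b) * t := by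
    simpa using (hzt.trans (sub_dvd_eval_sub z t p)).add ht
  obtain ⟨u, v, hu, hv, huv⟩ := hab.exists_le_mul_add_mul_eq ha hb
    (le_of_mul_le_mul_left (by linarith) hd0 : (a + b) * L + a * b ≤ M)
  have hdu : u ≤ d * u := le_mul_of_one_le_left (by linarith) hd
  have hdv : v ≤ d * v := le_mul_of_one_le_left (by linarith) hd
  have ht' : -|t| ≤ t := neg_abs_le t
  refine ⟨t + d * u, t + d * v, z, by linarith, by linarith, by linarith, by linarith,
    by linarith, hKz, by linear_combination -hM + d * huv, ⟨u, by ring⟩, ⟨v, by ring⟩, hzt⟩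
end

section
/- Let p ∈ ℤ[z] be a polynomial of degree at least 1 with positive leading coefficient, let d be a positive integer, let t be an integer, and let δ > 0 be a real number. Then for all sufficiently large real x there exists an integer z with z ≡ t (mod d) such that x ≤ p(z) ≤ (1+δ)·x. -/
open Polynomial Filter Asymptotics

/-!
Along the progression `z = t + d n` the values `g n = p(t + d n)` tend to infinity, and since
`p(y + d) ~ p(y)` as `y → ∞`, eventually `g (n + 1) ≤ (1 + δ) g n`. For large `x`, the first
index `n` with `x ≤ g n` is then past that threshold, so `g n ≤ (1 + δ) g (n - 1) < (1 + δ) x`.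
-/

namespace Polynomial

theorem isEquivalent_atTop_eval_add (q : ℝ[X]) (a : ℝ) :
    (fun x => q.eval (x + a)) ~[atTop] fun x => q.eval x := by
  have hlin : (X + C a).natDegree = 1 := natDegree_X_add_C a
  have hdeg : (q.comp (X + C a)).natDegree = q.natDegree := by
    rw [natDegree_comp, hlin, mul_one]
  have hlead : (q.comp (X + C a)).leadingCoeff = q.leadingCoeff := by
    rw [leadingCoeff_comp (by rw [hlin]; norm_num), leadingCoeff_X_add_C, one_pow, mul_one]
  have h := (q.comp (X + C a)).isEquivalent_atTop_lead
  rw [hdeg, hlead] at h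
  simpa using h.trans q.isEquivalent_atTop_lead.symm

theorem eventually_eval_add_le_mul {q : ℝ[X]} (hdeg : 0 < q.degree) (hlead : 0 ≤ q.leadingCoeff)
    (a : ℝ) {c : ℝ} (hc : 1 < c) : ∀ᶠ x in atTop, q.eval (x + a) ≤ c * q.eval x := by
  have hpos := (q.tendsto_atTop_of_leadingCoeff_nonneg hdeg hlead).eventually_gt_atTop 0
  have hratio := ((isEquivalent_iff_tendsto_one (hpos.mono fun _ hx => hx.ne')).mp
    (q.isEquivalent_atTop_eval_add a)).eventually_lt_const hc
  filter_upwards [hpos, hratio] with x hx hlt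
  exact ((div_lt_iff₀ hx).mp hlt).le

end Polynomial

theorem Filter.Tendsto.eventually_exists_mem_Icc_mul {g : ℕ → ℝ} (hg : Tendsto g atTop atTop)
    {c : ℝ} (hc : 0 ≤ c) (hstep : ∀ᶠ n in atTop, g (n + 1) ≤ c * g n) :
    ∀ᶠ x in atTop, ∃ n, g n ∈ Set.Icc x (c * x) := by
  obtain ⟨N, hN⟩ := eventually_atTop.mp hstep
  have hbig : ∀ᶠ x in atTop, ∀ n ∈ Finset.range (N + 1), g n < x :=
    (Finset.range (N + 1)).eventually_all.2 fun n _ => eventually_gt_atTop (g n)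
  filter_upwards [hbig] with x hx
  have hex : ∃ n, x ≤ g n := (hg.eventually_ge_atTop x).exists
  have hN_lt : N < Nat.find hex := by
    by_contra! h
    exact (hx _ (Finset.mem_range.2 (Nat.lt_succ_of_le h))).not_ge (Nat.find_spec hex)
  obtain ⟨m, hm⟩ : ∃ m, Nat.find hex = m + 1 := Nat.exists_eq_add_one.2 (by omega)
  have hgm : g m < x := not_le.1 (Nat.find_min hex (by omega))
  refine ⟨m + 1, hm ▸ Nat.find_spec hex, ?_⟩
  calc g (m + 1) ≤ c * g m := hN m (by omega)
    _ ≤ c * x := mul_le_mul_of_nonneg_left hgm.le hc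

/-- **Lemma: polynomial values in a linear gap.** Let `p ∈ ℤ[z]` have degree at
least 1 and positive leading coefficient, let `d` be a positive integer, `t` an integer and
`δ > 0` a real number. Then for all sufficiently large real `x` there exists an integer `z` with
`z ≡ t (mod d)` such that `x ≤ p(z) ≤ (1+δ)·x`. -/
theorem stmt_8 (p : Polynomial ℤ) (hdeg : 1 ≤ p.natDegree) (hlead : 0 < p.leadingCoeff)
    (d : ℕ) (hd : 0 < d) (t : ℤ) (δ : ℝ) (hδ : 0 < δ) :
    ∃ X : ℝ, ∀ x : ℝ, X ≤ x → ∃ z : ℤ, (d : ℤ) ∣ z - t ∧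
      x ≤ ((p.eval z : ℤ) : ℝ) ∧ ((p.eval z : ℤ) : ℝ) ≤ (1 + δ) * x := by
  set P : ℝ[X] := p.map (Int.castRingHom ℝ)
  have hPdeg : 0 < P.degree := by
    rw [degree_map_eq_of_injective Int.cast_injective, ← natDegree_pos_iff_degree_pos]
    omega
  have hPlead : 0 ≤ P.leadingCoeff := by
    rw [leadingCoeff_map_of_injective Int.cast_injective]
    exact Int.cast_nonneg hlead.le
  have hP_eval (z : ℤ) : P.eval (z : ℝ) = ((p.eval z : ℤ) : ℝ) := eval_intCast_map _ _ _
  set u : ℕ → ℝ := fun n => t + d * n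
  have hu : Tendsto u atTop atTop :=
    tendsto_atTop_add_const_left _ _
      (tendsto_natCast_atTop_atTop.const_mul_atTop (by exact_mod_cast hd))
  have hg : Tendsto (fun n => P.eval (u n)) atTop atTop :=
    (P.tendsto_atTop_of_leadingCoeff_nonneg hPdeg hPlead).comp hu
  have hstep : ∀ᶠ n in atTop, P.eval (u (n + 1)) ≤ (1 + δ) * P.eval (u n) := by
    filter_upwards [hu.eventually (P.eventually_eval_add_le_mul hPdeg hPlead d
      (lt_add_of_pos_right 1 hδ))] with n hn
    rwa [show u (n + 1) = u n + d by simp only [u]; push_cast; ring]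
  obtain ⟨X, hX⟩ := eventually_atTop.mp (hg.eventually_exists_mem_Icc_mul (by linarith) hstep)
  refine ⟨X, fun x hx => ?_⟩
  obtain ⟨n, hlo, hhi⟩ := hX x hx
  have hz : u n = ((t + d * n : ℤ) : ℝ) := by push_cast [u]; rfl
  rw [hz, hP_eval] at hlo hhi
  exact ⟨t + d * n, ⟨n, by ring⟩, hlo, hhi⟩
end

section
/- Let u, m', a₁, a₂ be positive integers and C, v integers such that gcd(u, m') = gcd(a₁, m') = gcd(a₂, m') = 1 and (a₁ + a₂)·v ≡ C (mod u). Set m = u·m', and let S denote the set of residue classes γ in ℤ/mℤ with γ ≡ v (mod u). Then for every γ₁ ∈ S there exists a unique γ₂ ∈ S such that a₁·γ₁ + a₂·γ₂ ≡ C (mod m), and the map S → S sending γ₁ to this γ₂ is a bijection. -/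
/-!
Both conditions on `γ₂` are read off through the Chinese remainder isomorphism
`ZMod (u * m') ≃ ZMod u × ZMod m'`. Modulo `u` the equation `a₁ γ₁ + a₂ γ₂ = C` holds
automatically on the residue class of `v`, because `(a₁ + a₂) v ≡ C`; modulo `m'` it pins down
`γ₂ = a₂⁻¹ (C - a₁ γ₁)`, since `a₂` is a unit there. So `γ₂` is unique, and by the symmetric
argument with `a₁` invertible modulo `m'` the resulting map `γ₁ ↦ γ₂` is a bijection.
-/

theorem Set.exists_bijOn_of_existsUnique {α β : Type*} [Nonempty β] {s : Set α} {t : Set β}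
    {r : α → β → Prop} (hst : ∀ x ∈ s, ∃! y, y ∈ t ∧ r x y)
    (hts : ∀ y ∈ t, ∃! x, x ∈ s ∧ r x y) :
    ∃ f : α → β, Set.BijOn f s t ∧ ∀ x ∈ s, r x (f x) := by
  have : ∀ x, ∃ y, x ∈ s → y ∈ t ∧ r x y := fun x => by
    by_cases hx : x ∈ s
    · obtain ⟨y, hy, -⟩ := hst x hx
      exact ⟨y, fun _ => hy⟩
    · exact ⟨Classical.arbitrary β, fun h => absurd h hx⟩
  choose f hf using this
  refine ⟨f, ⟨fun x hx => (hf x hx).1, fun x hx x' hx' hxx' => ?_, fun y hy => ?_⟩,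
    fun x hx => (hf x hx).2⟩
  · exact (hts (f x) (hf x hx).1).unique ⟨hx, (hf x hx).2⟩ ⟨hx', hxx' ▸ (hf x' hx').2⟩
  · obtain ⟨x, ⟨hx, hxy⟩, -⟩ := hts y hy
    exact ⟨x, hx, (hst x hx).unique (hf x hx) ⟨hy, hxy⟩⟩

namespace ZMod

theorem castHom_prod_castHom_bijective {m n : ℕ} (h : m.Coprime n) :
    Function.Bijective
      ((castHom (dvd_mul_right m n) (ZMod m)).prod (castHom (dvd_mul_left n m) (ZMod n))) := by
  rw [Subsingleton.elim ((castHom _ (ZMod m)).prod (castHom _ (ZMod n)))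
    (chineseRemainder h : ZMod (m * n) →+* ZMod m × ZMod n)]
  exact (chineseRemainder h).bijective

theorem existsUnique_linear_eq_of_castHom_eq {u m' a₁ a₂ : ℕ} {C v : ℤ} (hu : u.Coprime m')
    (ha₂ : a₂.Coprime m') (hCv : (u : ℤ) ∣ C - ((a₁ : ℤ) + a₂) * v) (γ₁ : ZMod (u * m'))
    (hγ₁ : castHom (dvd_mul_right u m') (ZMod u) γ₁ = (v : ZMod u)) :
    ∃! γ₂ : ZMod (u * m'), castHom (dvd_mul_right u m') (ZMod u) γ₂ = (v : ZMod u) ∧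
      (a₁ : ZMod (u * m')) * γ₁ + (a₂ : ZMod (u * m')) * γ₂ = (C : ZMod (u * m')) := by
  set φu := castHom (dvd_mul_right u m') (ZMod u)
  set φm := castHom (dvd_mul_left m' u) (ZMod m')
  set w := unitOfCoprime a₂ ha₂
  have hCu : (C : ZMod u) = a₁ * v + a₂ * v := by
    have := (intCast_zmod_eq_zero_iff_dvd _ u).mpr hCv
    push_cast at this
    linear_combination this
  have hbij := castHom_prod_castHom_bijective hu
  have key : ∀ γ₂, (φu γ₂ = v ∧ (a₁ : ZMod (u * m')) * γ₁ + a₂ * γ₂ = C) ↔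
      (φu.prod φm) γ₂ = ((v : ZMod u), (w⁻¹ : (ZMod m')ˣ) * ((C : ZMod m') - a₁ * φm γ₁)) := by
    intro γ₂
    rw [← hbij.injective.eq_iff]
    simp only [RingHom.prod_apply, Prod.mk.injEq]
    simp only [map_add, map_mul, map_natCast, map_intCast]
    rw [Units.eq_inv_mul_iff_mul_eq, eq_sub_iff_add_eq, coe_unitOfCoprime, add_comm (_ * φm γ₂)]
    constructor
    · rintro ⟨hγ₂, -, h⟩
      exact ⟨hγ₂, h⟩
    · rintro ⟨hγ₂, h⟩
      exact ⟨hγ₂, by rw [hγ₁, hγ₂, hCu], h⟩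
  exact (existsUnique_congr key).mpr (hbij.existsUnique _)

end ZMod

theorem stmt_9_general (u m' a₁ a₂ : ℕ)
    (C v : ℤ)
    (h1 : Nat.Coprime u m') (h2 : Nat.Coprime a₁ m') (h3 : Nat.Coprime a₂ m')
    (hCv : (u : ℤ) ∣ C - ((a₁ : ℤ) + a₂) * v) :
    (∀ γ₁ : ZMod (u * m'),
        ZMod.castHom (dvd_mul_right u m') (ZMod u) γ₁ = (v : ZMod u) →
      ∃! γ₂ : ZMod (u * m'),
        ZMod.castHom (dvd_mul_right u m') (ZMod u) γ₂ = (v : ZMod u) ∧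
        (a₁ : ZMod (u * m')) * γ₁ + (a₂ : ZMod (u * m')) * γ₂ = (C : ZMod (u * m'))) ∧
    ∃ f : ZMod (u * m') → ZMod (u * m'),
      Set.BijOn f
        {γ : ZMod (u * m') | ZMod.castHom (dvd_mul_right u m') (ZMod u) γ = (v : ZMod u)}
        {γ : ZMod (u * m') | ZMod.castHom (dvd_mul_right u m') (ZMod u) γ = (v : ZMod u)} ∧
      ∀ γ₁ : ZMod (u * m'),
        ZMod.castHom (dvd_mul_right u m') (ZMod u) γ₁ = (v : ZMod u) →
        (a₁ : ZMod (u * m')) * γ₁ + (a₂ : ZMod (u * m')) * f γ₁ = (C : ZMod (u * m')) := by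
  have forward := ZMod.existsUnique_linear_eq_of_castHom_eq h1 h3 hCv
  have backward : ∀ γ₂ : ZMod (u * m'),
      ZMod.castHom (dvd_mul_right u m') (ZMod u) γ₂ = (v : ZMod u) →
      ∃! γ₁ : ZMod (u * m'), ZMod.castHom (dvd_mul_right u m') (ZMod u) γ₁ = (v : ZMod u) ∧
        (a₁ : ZMod (u * m')) * γ₁ + (a₂ : ZMod (u * m')) * γ₂ = (C : ZMod (u * m')) := by
    intro γ₂ hγ₂
    simp_rw [add_comm ((a₁ : ZMod (u * m')) * _)]
    exact ZMod.existsUnique_linear_eq_of_castHom_eq h1 h2 (by rwa [add_comm (a₂ : ℤ)]) γ₂ hγ₂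
  exact ⟨forward, Set.exists_bijOn_of_existsUnique forward backward⟩

/-- **Residue-class bijection lemma.** Let `u, m', a₁, a₂` be positive integers
and `C, v` integers with `gcd(u,m') = gcd(a₁,m') = gcd(a₂,m') = 1` and
`(a₁+a₂)·v ≡ C (mod u)`. Set `m = u·m'` and let `S ⊆ ℤ/mℤ` be the set of residue classes that
reduce to `v` modulo `u`. Then for every `γ₁ ∈ S` there is a unique `γ₂ ∈ S` with
`a₁·γ₁ + a₂·γ₂ ≡ C (mod m)`, and there is a bijection of `S` onto itself sending each `γ₁` to
this `γ₂`. -/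
theorem stmt_9 (u m' a₁ a₂ : ℕ) (hu : 0 < u) (hm' : 0 < m') (ha₁ : 0 < a₁) (ha₂ : 0 < a₂)
    (C v : ℤ)
    (h1 : Nat.Coprime u m') (h2 : Nat.Coprime a₁ m') (h3 : Nat.Coprime a₂ m')
    (hCv : (u : ℤ) ∣ C - ((a₁ : ℤ) + a₂) * v) :
    (∀ γ₁ : ZMod (u * m'),
        ZMod.castHom (dvd_mul_right u m') (ZMod u) γ₁ = (v : ZMod u) →
      ∃! γ₂ : ZMod (u * m'),
        ZMod.castHom (dvd_mul_right u m') (ZMod u) γ₂ = (v : ZMod u) ∧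
        (a₁ : ZMod (u * m')) * γ₁ + (a₂ : ZMod (u * m')) * γ₂ = (C : ZMod (u * m'))) ∧
    ∃ f : ZMod (u * m') → ZMod (u * m'),
      Set.BijOn f
        {γ : ZMod (u * m') | ZMod.castHom (dvd_mul_right u m') (ZMod u) γ = (v : ZMod u)}
        {γ : ZMod (u * m') | ZMod.castHom (dvd_mul_right u m') (ZMod u) γ = (v : ZMod u)} ∧
      ∀ γ₁ : ZMod (u * m'),
        ZMod.castHom (dvd_mul_right u m') (ZMod u) γ₁ = (v : ZMod u) →
        (a₁ : ZMod (u * m')) * γ₁ + (a₂ : ZMod (u * m')) * f γ₁ = (C : ZMod (u * m')) :=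
  stmt_9_general u m' a₁ a₂ C v h1 h2 h3 hCv
end

section
/- Let a, b, c, D be positive integers and let p(z) = a_D z^D + ... + a_1 z + a_0 ∈ ℤ[z] with a_D > 0, c ∣ a_1, and c² ∣ a_0, so that q(z) = Σ_{i=0}^{D} a_i c^{i−2} z^i is a polynomial with integer coefficients (q(z) = c^{-2}·p(c·z)). If the equation a·x + b·y = q(z) is 2-Ramsey, then the equation a·c·x + b·c·y = p(z) is 2-Ramsey. -/
/-!
Multiplying a solution of `a x + b y = q(z)` by `c` gives a solution of
`a c x + b c y = p(z)`, because `p(c z) = c² q(z)`. Given a colouring `φ`, colour `n` by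
`φ (c n)`; the monochromatic solutions for that colouring, scaled by `c`, are infinitely many
distinct monochromatic solutions for `φ`.
-/

open Polynomial

def monochromaticSolutions {α : Type*} (φ : ℕ → α) (E : ℕ → ℕ → ℕ → Prop) :
    Set (ℕ × ℕ × ℕ) :=
  {w | 0 < w.1 ∧ 0 < w.2.1 ∧ 0 < w.2.2 ∧ φ w.1 = φ w.2.1 ∧ φ w.1 = φ w.2.2 ∧ E w.1 w.2.1 w.2.2}

theorem monochromaticSolutions_infinite_of_scale {α : Type*} {φ : ℕ → α}
    {E E' : ℕ → ℕ → ℕ → Prop} {c : ℕ} (hc : 0 < c)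
    (hE : ∀ x y z, E x y z → E' (c * x) (c * y) (c * z))
    (h : (monochromaticSolutions (fun n => φ (c * n)) E).Infinite) :
    (monochromaticSolutions φ E').Infinite := by
  refine (h.image (smul_right_injective (ℕ × ℕ × ℕ) hc.ne').injOn).mono ?_
  rintro _ ⟨⟨x, y, z⟩, ⟨hx, hy, hz, hxy, hxz, hxyz⟩, rfl⟩
  simp only [Prod.smul_mk, smul_eq_mul]
  exact ⟨by positivity, by positivity, by positivity, hxy, hxz, hE x y z hxyz⟩

theorem mul_add_mul_eq_eval_mul {R : Type*} [CommRing R] {p q : R[X]} {a b c x y z : R}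
    (hq : c ^ 2 * q.eval z = p.eval (c * z)) (h : a * x + b * y = q.eval z) :
    a * c * (c * x) + b * c * (c * y) = p.eval (c * z) := by
  rw [← hq, ← h]
  ring

theorem stmt_10_general (a b c : ℕ) (hc : 0 < c)
    (p q : Polynomial ℤ)
    (hq : ∀ z : ℤ, (c : ℤ) ^ 2 * q.eval z = p.eval ((c : ℤ) * z))
    (hramsey : ∀ φ : ℕ → Fin 2,
      {w : ℕ × ℕ × ℕ | 0 < w.1 ∧ 0 < w.2.1 ∧ 0 < w.2.2 ∧
        φ w.1 = φ w.2.1 ∧ φ w.1 = φ w.2.2 ∧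
        (a : ℤ) * w.1 + (b : ℤ) * w.2.1 = q.eval (w.2.2 : ℤ)}.Infinite) :
    ∀ φ : ℕ → Fin 2,
      {w : ℕ × ℕ × ℕ | 0 < w.1 ∧ 0 < w.2.1 ∧ 0 < w.2.2 ∧
        φ w.1 = φ w.2.1 ∧ φ w.1 = φ w.2.2 ∧
        ((a : ℤ) * c) * w.1 + ((b : ℤ) * c) * w.2.1 = p.eval (w.2.2 : ℤ)}.Infinite := by
  intro φ
  refine monochromaticSolutions_infinite_of_scale
    (E := fun x y z => (a : ℤ) * x + (b : ℤ) * y = q.eval (z : ℤ))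
    (E' := fun x y z => (a : ℤ) * c * x + (b : ℤ) * c * y = p.eval (z : ℤ))
    hc (fun x y z h => ?_) (hramsey fun n => φ (c * n))
  push_cast
  exact mul_add_mul_eq_eval_mul (hq z) h

/-- **Lifting lemma.** Let `a, b, c, D` be positive integers and
`p(z) = a_D z^D + ⋯ + a_1 z + a_0 ∈ ℤ[z]` with `a_D > 0`, `c ∣ a_1` and `c² ∣ a_0`, so that
`q(z) = c^{-2}·p(c·z)` has integer coefficients (encoded by `c² · q(z) = p(c·z)` for all `z`).
If the equation `a·x + b·y = q(z)` is 2-Ramsey, then the equation `a·c·x + b·c·y = p(z)` is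
2-Ramsey. -/
theorem stmt_10 (a b c D : ℕ) (ha : 0 < a) (hb : 0 < b) (hc : 0 < c) (hD : 0 < D)
    (p q : Polynomial ℤ) (hpdeg : p.natDegree = D) (hlead : 0 < p.leadingCoeff)
    (hc1 : (c : ℤ) ∣ p.coeff 1) (hc0 : (c : ℤ) ^ 2 ∣ p.coeff 0)
    (hq : ∀ z : ℤ, (c : ℤ) ^ 2 * q.eval z = p.eval ((c : ℤ) * z))
    (hramsey : ∀ φ : ℕ → Fin 2,
      {w : ℕ × ℕ × ℕ | 0 < w.1 ∧ 0 < w.2.1 ∧ 0 < w.2.2 ∧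
        φ w.1 = φ w.2.1 ∧ φ w.1 = φ w.2.2 ∧
        (a : ℤ) * w.1 + (b : ℤ) * w.2.1 = q.eval (w.2.2 : ℤ)}.Infinite) :
    ∀ φ : ℕ → Fin 2,
      {w : ℕ × ℕ × ℕ | 0 < w.1 ∧ 0 < w.2.1 ∧ 0 < w.2.2 ∧
        φ w.1 = φ w.2.1 ∧ φ w.1 = φ w.2.2 ∧
        ((a : ℤ) * c) * w.1 + ((b : ℤ) * c) * w.2.1 = p.eval (w.2.2 : ℤ)}.Infinite :=
  stmt_10_general a b c hc p q hq hramsey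
end

section
/- Let p be a prime and let a, b be positive integers with p ∣ a and p ∤ b. Define the 2-colouring φ: ℤ⁺ → {0,1} by φ(t) = 0 if p ∣ t and φ(t) = 1 otherwise. Then there is no triple of positive integers (x, y, z) with φ(x) = φ(y) = φ(z) and a·x + b·y = z^{p−1} − 1. In particular, the equation a·x + b·y = z^{p−1} − 1 is not 2-Ramsey. -/
/-!
Reduce modulo `p`: the term `a·x` vanishes, leaving `b·y ≡ z^{p−1} − 1`. If `p` divides both
`y` and `z` this reads `0 ≡ −1`; if it divides neither, Fermat's little theorem turns the right
side into `0` while `b·y` is a unit.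
-/

theorem mul_add_mul_ne_pow_pred_sub_one {p : ℕ} [Fact p.Prime] {a b x y z : ℤ}
    (hpa : (p : ℤ) ∣ a) (hpb : ¬ (p : ℤ) ∣ b) (hyz : (p : ℤ) ∣ y ↔ (p : ℤ) ∣ z) :
    a * x + b * y ≠ z ^ (p - 1) - 1 := by
  intro heq
  have hmod := congrArg (Int.cast : ℤ → ZMod p) heq
  push_cast at hmod
  rw [(ZMod.intCast_zmod_eq_zero_iff_dvd a p).2 hpa, zero_mul, zero_add] at hmod
  by_cases hz : (p : ℤ) ∣ z
  · have hy0 : (y : ZMod p) = 0 := (ZMod.intCast_zmod_eq_zero_iff_dvd y p).2 (hyz.2 hz)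
    have hz0 : (z : ZMod p) = 0 := (ZMod.intCast_zmod_eq_zero_iff_dvd z p).2 hz
    rw [hy0, hz0, mul_zero, zero_pow (Nat.sub_ne_zero_of_lt (Fact.out : p.Prime).one_lt),
      zero_sub, zero_eq_neg] at hmod
    exact one_ne_zero hmod
  · have hz0 : (z : ZMod p) ≠ 0 := mt (ZMod.intCast_zmod_eq_zero_iff_dvd z p).1 hz
    have hb0 : (b : ZMod p) ≠ 0 := mt (ZMod.intCast_zmod_eq_zero_iff_dvd b p).1 hpb
    have hy0 : (y : ZMod p) ≠ 0 := mt (ZMod.intCast_zmod_eq_zero_iff_dvd y p).1 (mt hyz.1 hz)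
    rw [ZMod.pow_card_sub_one_eq_one hz0, sub_self] at hmod
    exact mul_ne_zero hb0 hy0 hmod

theorem eq_iff_dvd_iff_dvd_of_eq_ite {p : ℕ} {φ : ℕ → Fin 2}
    (hφ : ∀ t : ℕ, φ t = if p ∣ t then 0 else 1) (s t : ℕ) :
    φ s = φ t ↔ (p ∣ s ↔ p ∣ t) := by
  rw [hφ, hφ]
  split_ifs <;> simp_all

theorem stmt_11_general (p : ℕ) (hp : p.Prime) (a b : ℕ)
    (hpa : p ∣ a) (hpb : ¬ p ∣ b) (φ : ℕ → Fin 2)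
    (hφ : ∀ t : ℕ, φ t = if p ∣ t then 0 else 1) :
    (¬ ∃ x y z : ℕ, 0 < x ∧ 0 < y ∧ 0 < z ∧ φ x = φ y ∧ φ x = φ z ∧
        (a : ℤ) * x + (b : ℤ) * y = (z : ℤ) ^ (p - 1) - 1) ∧
    ¬ (∀ ψ : ℕ → Fin 2,
        {w : ℕ × ℕ × ℕ | 0 < w.1 ∧ 0 < w.2.1 ∧ 0 < w.2.2 ∧
          ψ w.1 = ψ w.2.1 ∧ ψ w.1 = ψ w.2.2 ∧
          (a : ℤ) * w.1 + (b : ℤ) * w.2.1 = (w.2.2 : ℤ) ^ (p - 1) - 1}.Infinite) := by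
  have : Fact p.Prime := ⟨hp⟩
  have no_mono : ¬ ∃ x y z : ℕ, 0 < x ∧ 0 < y ∧ 0 < z ∧ φ x = φ y ∧ φ x = φ z ∧
      (a : ℤ) * x + (b : ℤ) * y = (z : ℤ) ^ (p - 1) - 1 := by
    rintro ⟨x, y, z, -, -, -, hxy, hxz, heq⟩
    have hyz := (eq_iff_dvd_iff_dvd_of_eq_ite hφ y z).1 (hxy.symm.trans hxz)
    refine mul_add_mul_ne_pow_pred_sub_one (Int.natCast_dvd_natCast.2 hpa)
      (mt Int.natCast_dvd_natCast.1 hpb) ?_ heq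
    simpa only [Int.natCast_dvd_natCast] using hyz
  refine ⟨no_mono, fun hRamsey => ?_⟩
  obtain ⟨⟨x, y, z⟩, hx, hy, hz, hxy, hxz, heq⟩ := (hRamsey φ).nonempty
  exact no_mono ⟨x, y, z, hx, hy, hz, hxy, hxz, heq⟩

/-- **Example 2.** Let `p` be a prime and `a, b` positive integers with `p ∣ a`
and `p ∤ b`. Colour a positive integer `t` with colour `0` if `p ∣ t` and colour `1` otherwise.
Then no monochromatic triple of positive integers `(x,y,z)` satisfies
`a·x + b·y = z^{p−1} − 1`; in particular the equation `a·x + b·y = z^{p−1} − 1` is not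
2-Ramsey. -/
theorem stmt_11 (p : ℕ) (hp : p.Prime) (a b : ℕ) (ha : 0 < a) (hb : 0 < b)
    (hpa : p ∣ a) (hpb : ¬ p ∣ b) (φ : ℕ → Fin 2)
    (hφ : ∀ t : ℕ, φ t = if p ∣ t then 0 else 1) :
    (¬ ∃ x y z : ℕ, 0 < x ∧ 0 < y ∧ 0 < z ∧ φ x = φ y ∧ φ x = φ z ∧
        (a : ℤ) * x + (b : ℤ) * y = (z : ℤ) ^ (p - 1) - 1) ∧
    ¬ (∀ ψ : ℕ → Fin 2,
        {w : ℕ × ℕ × ℕ | 0 < w.1 ∧ 0 < w.2.1 ∧ 0 < w.2.2 ∧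
          ψ w.1 = ψ w.2.1 ∧ ψ w.1 = ψ w.2.2 ∧
          (a : ℤ) * w.1 + (b : ℤ) * w.2.1 = (w.2.2 : ℤ) ^ (p - 1) - 1}.Infinite) :=
  stmt_11_general p hp a b hpa hpb φ hφ
end

section
/- Let p be a prime, n ≥ 1 an integer, and let a, b be positive integers with p^n ∣ a and p^n ∤ b. Define the 2-colouring φ: ℤ⁺ → {0,1} by φ(t) = 0 if p ∣ t and φ(t) = 1 otherwise. Then there is no triple of positive integers (x, y, z) with φ(x) = φ(y) = φ(z) and a·x + b·y = z^{p^n − p^{n−1}} − 1. In particular, the equation a·x + b·y = z^{p^n − p^{n−1}} − 1 is not 2-Ramsey. -/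
/-!
The exponent `p ^ n - p ^ (n - 1)` is `φ (p ^ n)`. On the colour class of multiples of `p`,
`p` divides `a x + b y` but not `z ^ φ(p ^ n) - 1`. On the other class, Euler's theorem gives
`p ^ n ∣ z ^ φ(p ^ n) - 1`, hence `p ^ n ∣ b y`, and as `y` is prime to `p` this forces `p ^ n ∣ b`.
-/

theorem Nat.totient_prime_pow_eq_sub {p n : ℕ} (hp : p.Prime) (hn : n ≠ 0) :
    (p ^ n).totient = p ^ n - p ^ (n - 1) := by
  obtain ⟨k, rfl⟩ := Nat.exists_eq_succ_of_ne_zero hn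
  rw [Nat.totient_prime_pow_succ hp, Nat.mul_sub, pow_succ, mul_one, Nat.succ_sub_one]

theorem isUnit_of_dvd_of_dvd_pow_sub_one {R : Type*} [CommRing R] {p z : R} {e : ℕ}
    (he : e ≠ 0) (hz : p ∣ z) (h : p ∣ z ^ e - 1) : IsUnit p :=
  isUnit_of_dvd_one (by simpa using (dvd_pow hz he).sub h)

theorem Int.dvd_of_mul_add_mul_eq_pow_totient_sub_one {m x y z : ℕ} {a b : ℤ}
    (ha : (m : ℤ) ∣ a) (hy : y.Coprime m) (hz : z.Coprime m)
    (h : a * x + b * y = (z : ℤ) ^ m.totient - 1) : (m : ℤ) ∣ b := by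
  have hEuler : (m : ℤ) ∣ (z : ℤ) ^ m.totient - 1 := by
    simpa using (Nat.ModEq.pow_totient hz).symm.dvd
  have hby : (m : ℤ) ∣ b * y := by
    rw [show b * y = ((z : ℤ) ^ m.totient - 1) - a * x by linarith]
    exact hEuler.sub (ha.mul_right _)
  exact (Nat.isCoprime_iff_coprime.2 hy.symm).dvd_of_dvd_mul_right hby

theorem Nat.Prime.mul_add_mul_ne_pow_sub_one {p n a b x y z : ℕ} (hp : p.Prime)
    (hpa : p ^ n ∣ a) (hpb : ¬ p ^ n ∣ b) (hxy : p ∣ x ↔ p ∣ y) (hxz : p ∣ x ↔ p ∣ z) :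
    (a : ℤ) * x + (b : ℤ) * y ≠ (z : ℤ) ^ (p ^ n - p ^ (n - 1)) - 1 := by
  have hn : n ≠ 0 := by rintro rfl; simp at hpb
  rw [← Nat.totient_prime_pow_eq_sub hp hn]
  intro h
  by_cases hpx : p ∣ x
  · have hp_dvd : (p : ℤ) ∣ (z : ℤ) ^ (p ^ n).totient - 1 := by
      rw [← h]
      refine dvd_add (dvd_mul_of_dvd_left ?_ _) (dvd_mul_of_dvd_right ?_ _) <;> norm_cast
      exacts [(dvd_pow_self p hn).trans hpa, hxy.1 hpx]
    have hunit := isUnit_of_dvd_of_dvd_pow_sub_one (Nat.totient_pos.2 (pow_pos hp.pos n)).ne'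
      (Int.natCast_dvd_natCast.2 (hxz.1 hpx)) hp_dvd
    exact hp.ne_one (by simpa using Int.isUnit_iff_natAbs_eq.1 hunit)
  · have coprime_of_not_dvd {t : ℕ} (ht : ¬ p ∣ t) : t.Coprime (p ^ n) :=
      (Nat.Coprime.pow_left n (hp.coprime_iff_not_dvd.2 ht)).symm
    refine hpb (Int.natCast_dvd_natCast.1 ?_)
    exact Int.dvd_of_mul_add_mul_eq_pow_totient_sub_one (Int.natCast_dvd_natCast.2 hpa)
      (coprime_of_not_dvd (hpx ∘ hxy.2)) (coprime_of_not_dvd (hpx ∘ hxz.2)) (by exact_mod_cast h)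

theorem stmt_12_general (p : ℕ) (hp : p.Prime) (n : ℕ) (a b : ℕ)
    (hpa : p ^ n ∣ a) (hpb : ¬ p ^ n ∣ b) (φ : ℕ → Fin 2)
    (hφ : ∀ t : ℕ, φ t = if p ∣ t then 0 else 1) :
    (¬ ∃ x y z : ℕ, 0 < x ∧ 0 < y ∧ 0 < z ∧ φ x = φ y ∧ φ x = φ z ∧
        (a : ℤ) * x + (b : ℤ) * y = (z : ℤ) ^ (p ^ n - p ^ (n - 1)) - 1) ∧
    ¬ (∀ ψ : ℕ → Fin 2,
        {w : ℕ × ℕ × ℕ | 0 < w.1 ∧ 0 < w.2.1 ∧ 0 < w.2.2 ∧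
          ψ w.1 = ψ w.2.1 ∧ ψ w.1 = ψ w.2.2 ∧
          (a : ℤ) * w.1 + (b : ℤ) * w.2.1 =
            (w.2.2 : ℤ) ^ (p ^ n - p ^ (n - 1)) - 1}.Infinite) := by
  have hcolour {s t : ℕ} (h : φ s = φ t) : p ∣ s ↔ p ∣ t := by
    rw [hφ, hφ] at h
    by_cases hs : p ∣ s <;> by_cases ht : p ∣ t <;> simp_all
  have hnosol : ¬ ∃ x y z : ℕ, 0 < x ∧ 0 < y ∧ 0 < z ∧ φ x = φ y ∧ φ x = φ z ∧
      (a : ℤ) * x + (b : ℤ) * y = (z : ℤ) ^ (p ^ n - p ^ (n - 1)) - 1 := by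
    rintro ⟨x, y, z, -, -, -, hxy, hxz, h⟩
    exact hp.mul_add_mul_ne_pow_sub_one hpa hpb (hcolour hxy) (hcolour hxz) h
  refine ⟨hnosol, fun hall => ?_⟩
  obtain ⟨⟨x, y, z⟩, hw⟩ := (hall φ).nonempty
  exact hnosol ⟨x, y, z, hw⟩

/-- **Example 2, general form.** Let `p` be a prime, `n ≥ 1` an integer, and
`a, b` positive integers with `p^n ∣ a` and `p^n ∤ b`. Colour a positive integer `t` with colour
`0` if `p ∣ t` and colour `1` otherwise. Then no monochromatic triple of positive integers
`(x,y,z)` satisfies `a·x + b·y = z^{p^n − p^{n−1}} − 1`; in particular the equation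
`a·x + b·y = z^{p^n − p^{n−1}} − 1` is not 2-Ramsey. -/
theorem stmt_12 (p : ℕ) (hp : p.Prime) (n : ℕ) (hn : 1 ≤ n) (a b : ℕ)
    (ha : 0 < a) (hb : 0 < b) (hpa : p ^ n ∣ a) (hpb : ¬ p ^ n ∣ b) (φ : ℕ → Fin 2)
    (hφ : ∀ t : ℕ, φ t = if p ∣ t then 0 else 1) :
    (¬ ∃ x y z : ℕ, 0 < x ∧ 0 < y ∧ 0 < z ∧ φ x = φ y ∧ φ x = φ z ∧
        (a : ℤ) * x + (b : ℤ) * y = (z : ℤ) ^ (p ^ n - p ^ (n - 1)) - 1) ∧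
    ¬ (∀ ψ : ℕ → Fin 2,
        {w : ℕ × ℕ × ℕ | 0 < w.1 ∧ 0 < w.2.1 ∧ 0 < w.2.2 ∧
          ψ w.1 = ψ w.2.1 ∧ ψ w.1 = ψ w.2.2 ∧
          (a : ℤ) * w.1 + (b : ℤ) * w.2.1 =
            (w.2.2 : ℤ) ^ (p ^ n - p ^ (n - 1)) - 1}.Infinite) :=
  stmt_12_general p hp n a b hpa hpb φ hφ
end

section
/- Let p ∈ ℤ[z] be a polynomial of degree at least 2 with positive leading coefficient, and let a, b be distinct positive integers with gcd(a,b) = 1; set U = max(a,b). Let d be a positive integer and t an integer with (a+b)·t ≡ p(t) (mod d). Let φ: ℤ⁺ → {0,1} be a 2-colouring such that only finitely many triples of positive integers (x, y, z) satisfy a·x + b·y = p(z) and φ(x) = φ(y) = φ(z). Call a positive integer k with k ≡ t (mod d) a d-switch if φ(k) ≠ φ(k+d), and call two d-switches k₁ < k₂ neighbouring if there is no d-switch k₃ with k₁ < k₃ < k₂. Then there exist infinitely many pairs of neighbouring d-switches k₁ < k₂ with k₂ < U·k₁. -/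
/-!
Swap `a` and `b` so that `a < b = U`, and suppose that beyond some `N` neighbouring switches
always satisfy `k₂ ≥ b k₁`. Then any two switches `N < u < v` satisfy `b u ≤ v`, so along the
progression `t + dℤ` the colouring is constant on the windows `(σ / b, σ]` and `[σ + d, b σ]`
around every switch `σ > N`. This gives monochromatic solutions of `a x + b y = p(z)` with `z`
arbitrarily large, contradicting finiteness.

If there are only finitely many switches, take `z ≡ t` large and a solution with
`x, y ≡ t (mod d)` and `x, y ≥ z`. Otherwise take a large switch `s`. Solve `a x + b y = p(s)`
with `x` just below `s`, and `a x + b y = p(s + d)` with `x` just above `s + d`. Then `x`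
has the colour of `s` (resp. `s + d`). If neither solution is monochromatic, the two `y`s
differ in colour, giving a switch `σ` with `b σ ≈ p(s)`. The balanced solutions
(`x ≤ y < x + d(a + b)`) of both equations have `x, y ≈ p(s) / (a + b)`. Since
`p(s + d) ~ p(s)` and `b² > a + b`, they lie in the window `(σ / b, σ]`. So all four
have the colour of `σ`, which is that of `s` or of `s + d`.
-/

open Polynomial Filter

namespace Polynomial

theorem tendsto_eval_intCast_atTop_s15 {q : ℤ[X]} (hdeg : 0 < q.degree)
    (hlc : 0 < q.leadingCoeff) :
    Tendsto (fun s : ℤ => q.eval s) atTop atTop := by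
  have hinj : Function.Injective (Int.castRingHom ℝ) := Int.cast_injective
  have hℝ : Tendsto (fun x : ℝ => (q.map (Int.castRingHom ℝ)).eval x) atTop atTop := by
    apply tendsto_atTop_of_leadingCoeff_nonneg
    · rwa [degree_map_eq_of_injective hinj]
    · rw [leadingCoeff_map_of_injective hinj]
      simpa using hlc.le
  rw [← tendsto_intCast_atTop_iff (R := ℝ)]
  refine (hℝ.comp tendsto_intCast_atTop_atTop).congr fun s => ?_
  simp [eval_intCast_map]

variable {p : ℤ[X]}

theorem eventually_le_mul_eval_add_sub_mul_eval_add (hdeg : 2 ≤ p.natDegree)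
    (hlc : 0 < p.leadingCoeff) {c c' : ℤ} (hc : c' < c) (δ δ' g h : ℤ) :
    ∀ᶠ s in atTop, g * s + h ≤ c * p.eval (s + δ) - c' * p.eval (s + δ') := by
  set q := C c * taylor δ p - C c' * taylor δ' p - (C g * X + C h)
  have hlin : (C g * X + C h).natDegree < p.natDegree :=
    natDegree_linear_le.trans_lt (by omega)
  have hle : q.natDegree ≤ p.natDegree := by
    refine (natDegree_sub_le _ _).trans
      (max_le ((natDegree_sub_le _ _).trans (max_le ?_ ?_)) hlin.le)
    · exact (natDegree_C_mul_le _ _).trans (natDegree_taylor p δ).le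
    · exact (natDegree_C_mul_le _ _).trans (natDegree_taylor p δ').le
  have hcoeff : q.coeff p.natDegree = (c - c') * p.leadingCoeff := by
    simp only [q, coeff_sub, coeff_C_mul, coeff_taylor_natDegree,
      coeff_eq_zero_of_natDegree_lt hlin]
    ring
  have hpos : 0 < q.coeff p.natDegree := by rw [hcoeff]; exact mul_pos (by omega) hlc
  have hq : q.natDegree = p.natDegree := natDegree_eq_of_le_of_coeff_ne_zero hle hpos.ne'
  have hqdeg : 0 < q.degree := by
    rw [degree_eq_natDegree (by rintro h; simp [h] at hpos), hq]
    exact_mod_cast (by omega : 0 < p.natDegree)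
  have hqlc : 0 < q.leadingCoeff := by rwa [leadingCoeff, hq]
  filter_upwards [(tendsto_eval_intCast_atTop_s15 hqdeg hqlc).eventually_ge_atTop 0] with s hs
  simp [q, taylor_eval] at hs
  linarith

theorem eventually_le_mul_min_sub_mul_max (hdeg : 2 ≤ p.natDegree) (hlc : 0 < p.leadingCoeff)
    {c c' : ℤ} (hc : c' < c) (δ g h : ℤ) :
    ∀ᶠ s in atTop, g * s + h ≤
      c * min (p.eval s) (p.eval (s + δ)) - c' * max (p.eval s) (p.eval (s + δ)) := by
  have key := fun δ₁ δ₂ => eventually_le_mul_eval_add_sub_mul_eval_add hdeg hlc hc δ₁ δ₂ g h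
  filter_upwards [key 0 0, key 0 δ, key δ 0, key δ δ] with s h₁ h₂ h₃ h₄
  simp only [add_zero] at h₁ h₂ h₃
  rcases min_choice (p.eval s) (p.eval (s + δ)) with hm | hm <;>
    rcases max_choice (p.eval s) (p.eval (s + δ)) with hM | hM <;>
    rw [hm, hM] <;> assumption

end Polynomial

section Diophantine

variable {a b d t P : ℤ}

theorem exists_mul_add_mul_eq_of_dvd (hab : IsCoprime a b) (h : d ∣ P - (a + b) * t) :
    ∃ x y, a * x + b * y = P ∧ d ∣ x - t ∧ d ∣ y - t := by
  obtain ⟨M, hM⟩ := h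
  obtain ⟨e, f, hef⟩ := hab
  exact ⟨t + d * (e * M), t + d * (f * M), by linear_combination -hM + d * M * hef,
    ⟨e * M, by ring⟩, ⟨f * M, by ring⟩⟩

theorem exists_mul_add_mul_eq_of_dvd_mem_Ioc (hab : IsCoprime a b) (h : d ∣ P - (a + b) * t)
    (hdb : 0 < d * b) (w : ℤ) :
    ∃ x y, a * x + b * y = P ∧ d ∣ x - t ∧ d ∣ y - t ∧ x ∈ Set.Ioc w (w + d * b) := by
  obtain ⟨x, y, hxy, hx, hy⟩ := exists_mul_add_mul_eq_of_dvd hab h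
  set n := toIocDiv hdb w x
  refine ⟨x - n * (d * b), y + n * (d * a), by linear_combination hxy, ?_, ?_, ?_⟩
  · rw [show x - n * (d * b) - t = x - t - d * (n * b) by ring]
    exact dvd_sub hx (dvd_mul_right _ _)
  · rw [show y + n * (d * a) - t = y - t + d * (n * a) by ring]
    exact dvd_add hy (dvd_mul_right _ _)
  · have hr := toIocMod_mem_Ioc hdb w x
    rwa [← self_sub_toIocDiv_zsmul, smul_eq_mul] at hr

theorem exists_mul_add_mul_eq_of_dvd_le_lt (hab : IsCoprime a b) (h : d ∣ P - (a + b) * t)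
    (hq : 0 < d * (a + b)) :
    ∃ x y, a * x + b * y = P ∧ d ∣ x - t ∧ d ∣ y - t ∧ x ≤ y ∧ y < x + d * (a + b) := by
  obtain ⟨x, y, hxy, hx, hy⟩ := exists_mul_add_mul_eq_of_dvd hab h
  set n := toIcoDiv hq 0 (y - x)
  have hr := toIcoMod_mem_Ico hq 0 (y - x)
  rw [← self_sub_toIcoDiv_zsmul, smul_eq_mul, zero_add] at hr
  refine ⟨x + n * (d * b), y - n * (d * a), by linear_combination hxy, ?_, ?_, ?_, ?_⟩
  · rw [show x + n * (d * b) - t = x - t + d * (n * b) by ring]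
    exact dvd_add hx (dvd_mul_right _ _)
  · rw [show y - n * (d * a) - t = y - t - d * (n * a) by ring]
    exact dvd_sub hy (dvd_mul_right _ _)
  · linarith [hr.1]
  · linarith [hr.2]

theorem frequently_atTop_dvd_sub {d : ℕ} (hd : 0 < d) (t : ℤ) :
    ∃ᶠ z : ℕ in atTop, (d : ℤ) ∣ z - t := by
  refine frequently_atTop.mpr fun n => ⟨d * n + (t % d).toNat,
    le_add_right (Nat.le_mul_of_pos_left n hd), ?_⟩
  have h := Int.mul_ediv_add_emod t d
  push_cast [Int.toNat_of_nonneg (Int.emod_nonneg t (by omega : (d : ℤ) ≠ 0))]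
  exact ⟨n - t / d, by linarith⟩

end Diophantine

section Switches

variable {α : Type*}

def IsSwitch (φ : ℕ → α) (d : ℕ) (t : ℤ) (k : ℕ) : Prop :=
  0 < k ∧ (d : ℤ) ∣ k - t ∧ φ k ≠ φ (k + d)

def SwitchesSparse (φ : ℕ → α) (d : ℕ) (t : ℤ) (b N : ℕ) : Prop :=
  ∀ ⦃u v⦄, IsSwitch φ d t u → IsSwitch φ d t v → N < u → u < v → b * u ≤ v

variable {φ : ℕ → α} {d : ℕ} {t : ℤ}

theorem IsSwitch.d_pos {k : ℕ} (h : IsSwitch φ d t k) : 0 < d :=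
  Nat.pos_of_ne_zero fun hd => h.2.2 (by simp [hd])

theorem exists_isSwitch_mem_Ico_of_apply_ne {n m : ℕ} (hn : 0 < n) (hnt : (d : ℤ) ∣ n - t)
    (hmt : (d : ℤ) ∣ m - t) (hnm : n ≤ m) (hne : φ n ≠ φ m) :
    ∃ k ∈ Set.Ico n m, IsSwitch φ d t k := by
  obtain ⟨j, rfl⟩ : ∃ j, m = n + d * j := by
    have : (d : ℤ) ∣ ((m - n : ℕ) : ℤ) := by
      push_cast [hnm]
      simpa using dvd_sub hmt hnt
    obtain ⟨j, hj⟩ := Int.natCast_dvd_natCast.mp this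
    exact ⟨j, by omega⟩
  clear hmt hnm
  have hd : 0 < d := Nat.pos_of_ne_zero fun h => by simp [h] at hne
  induction j with
  | zero => simp at hne
  | succ j ih =>
    by_cases h : φ n = φ (n + d * j)
    · refine ⟨n + d * j, ⟨by omega, by rw [mul_add_one]; omega⟩, by omega, ?_, ?_⟩
      · push_cast
        simpa [add_sub_right_comm] using dvd_add hnt (dvd_mul_right (d : ℤ) j)
      · rw [← h]
        rwa [mul_add_one, ← add_assoc] at hne
    · obtain ⟨k, hk, hks⟩ := ih h
      exact ⟨k, ⟨hk.1, hk.2.trans_le (by rw [mul_add_one]; omega)⟩, hks⟩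

theorem apply_eq_of_forall_not_isSwitch {n m : ℕ} (hn : 0 < n) (hnt : (d : ℤ) ∣ n - t)
    (hmt : (d : ℤ) ∣ m - t) (hnm : n ≤ m) (h : ∀ k ∈ Set.Ico n m, ¬ IsSwitch φ d t k) :
    φ n = φ m := by
  by_contra hne
  obtain ⟨k, hk, hks⟩ := exists_isSwitch_mem_Ico_of_apply_ne hn hnt hmt hnm hne
  exact h k hk hks

theorem exists_isSwitch_mul_mem_Ico {b y₀ y₁ : ℕ} {L M : ℤ} (hb : 0 < b) (hy₀ : 0 < y₀)
    (hy₁ : 0 < y₁) (hy₀t : (d : ℤ) ∣ y₀ - t) (hy₁t : (d : ℤ) ∣ y₁ - t) (hne : φ y₀ ≠ φ y₁)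
    (h₀ : (b * y₀ : ℤ) ∈ Set.Icc L M) (h₁ : (b * y₁ : ℤ) ∈ Set.Icc L M) :
    ∃ σ, IsSwitch φ d t σ ∧ (b * σ : ℤ) ∈ Set.Ico L M := by
  wlog hle : y₀ ≤ y₁ generalizing y₀ y₁
  · exact this hy₁ hy₀ hy₁t hy₀t (Ne.symm hne) h₁ h₀ (le_of_not_ge hle)
  obtain ⟨σ, ⟨hσ₀, hσ₁⟩, hσ⟩ := exists_isSwitch_mem_Ico_of_apply_ne hy₀ hy₀t hy₁t hle hne
  have hbσ₀ : (b * y₀ : ℤ) ≤ b * σ := by gcongr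
  have hbσ₁ : (b * σ : ℤ) < b * y₁ := by gcongr
  exact ⟨σ, hσ, h₀.1.trans hbσ₀, hbσ₁.trans_le h₁.2⟩

theorem apply_eq_of_forall_ge_not_isSwitch {R z x : ℕ} (hR : ∀ k ≥ R, ¬ IsSwitch φ d t k)
    (hRz : R < z) (hzt : (d : ℤ) ∣ z - t) (hxt : (d : ℤ) ∣ x - t) (hzx : z ≤ x) :
    φ z = φ x :=
  apply_eq_of_forall_not_isSwitch (by omega) hzt hxt hzx fun k hk =>
    hR k (hRz.le.trans hk.1)

variable {b N : ℕ}

theorem SwitchesSparse.apply_eq_of_le_of_lt_mul (hsparse : SwitchesSparse φ d t b N)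
    {σ x : ℕ} (hσ : IsSwitch φ d t σ) (hNx : N < x) (hxσ : x ≤ σ) (hσx : σ < b * x)
    (hxt : (d : ℤ) ∣ x - t) : φ x = φ σ :=
  apply_eq_of_forall_not_isSwitch (by omega) hxt hσ.2.1 hxσ fun k hk hks =>
    (hσx.trans_le (Nat.mul_le_mul_left b hk.1)).not_ge
      (hsparse hks hσ (hNx.trans_le hk.1) hk.2)

theorem SwitchesSparse.apply_add_eq_of_le_mul (hsparse : SwitchesSparse φ d t b N)
    {σ x : ℕ} (hσ : IsSwitch φ d t σ) (hNσ : N < σ) (hσx : σ + d ≤ x) (hxσ : x ≤ b * σ)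
    (hxt : (d : ℤ) ∣ x - t) : φ (σ + d) = φ x := by
  have hσdt : (d : ℤ) ∣ ((σ + d : ℕ) : ℤ) - t := by
    push_cast
    simpa [add_sub_right_comm] using dvd_add hσ.2.1 (dvd_refl (d : ℤ))
  exact apply_eq_of_forall_not_isSwitch (by omega) hσdt hxt hσx fun k hk hks =>
    (hk.2.trans_le hxσ).not_ge
      (hsparse hσ hks hNσ (by have := hσ.d_pos; have := hk.1; omega))

theorem mul_le_of_not_exists_neighbours {S : ℕ → Prop}
    (h : ¬ ∃ k₁ k₂ : ℕ, N < k₁ ∧ k₁ < k₂ ∧ S k₁ ∧ S k₂ ∧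
      (∀ k₃ : ℕ, S k₃ → ¬ (k₁ < k₃ ∧ k₃ < k₂)) ∧ k₂ < b * k₁)
    ⦃u v : ℕ⦄ (hu : S u) (hv : S v) (hNu : N < u) (huv : u < v) : b * u ≤ v := by
  classical
  have hex : ∃ k, S k ∧ u < k := ⟨v, hv, huv⟩
  obtain ⟨hk, huk⟩ := Nat.find_spec hex
  refine le_trans (not_lt.mp fun hlt => h ⟨u, Nat.find hex, hNu, huk, hu, hk,
    fun k₃ hk₃ h₃ => Nat.find_min hex h₃.2 ⟨hk₃, h₃.1⟩, hlt⟩) (Nat.find_min' hex ⟨hv, huv⟩)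

end Switches

section Solutions

variable {α : Type*} {p : ℤ[X]} {a b d N : ℕ} {t : ℤ} {φ : ℕ → α}

def monoSolutions (p : ℤ[X]) (a b : ℕ) (φ : ℕ → α) : Set (ℕ × ℕ × ℕ) :=
  {w | 0 < w.1 ∧ 0 < w.2.1 ∧ 0 < w.2.2 ∧ φ w.1 = φ w.2.1 ∧ φ w.1 = φ w.2.2 ∧
    (a : ℤ) * w.1 + (b : ℤ) * w.2.1 = p.eval (w.2.2 : ℤ)}

theorem Set.Finite.monoSolutions_comm (h : (monoSolutions p a b φ).Finite) :
    (monoSolutions p b a φ).Finite :=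
  (h.image fun w => (w.2.1, w.1, w.2.2)).subset fun ⟨x, y, z⟩ ⟨hx, hy, hz, hxy, hxz, heq⟩ =>
    ⟨(y, x, z), ⟨hy, hx, hz, hxy.symm, hxy.symm.trans hxz, by linarith⟩, rfl⟩

theorem dvd_eval_sub_mul_of_dvd {c d z t : ℤ} (hz : d ∣ z - t) (ht : d ∣ p.eval t - c * t) :
    d ∣ p.eval z - c * t := by
  simpa using dvd_add (hz.trans (sub_dvd_eval_sub z t p)) ht

theorem SwitchesSparse.exists_solution_below (hsparse : SwitchesSparse φ d t b N)
    (hcop : IsCoprime (a : ℤ) b) (hb : 1 < b) {s : ℕ} (hs : IsSwitch φ d t s)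
    (hsN : N + d + d * b * b < s) {P : ℤ} (hP : (d : ℤ) ∣ P - (a + b) * t)
    (hPN : (b * N + a * (s + d + d * b) : ℤ) < P) :
    ∃ x y : ℕ, 0 < x ∧ (a * x + b * y : ℤ) = P ∧ φ x = φ s ∧ (d : ℤ) ∣ y - t ∧ N < y ∧
      P - a * (s + d + d * b) ≤ (b * y : ℤ) ∧ (b * y : ℤ) ≤ P := by
  have hd := hs.d_pos
  obtain ⟨x, y, hxy, hxt, hyt, hx₁, hx₂⟩ :=
    exists_mul_add_mul_eq_of_dvd_mem_Ioc hcop hP (by positivity) ((s : ℤ) - d * b)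
  have hdb : d * b ≤ d * b * b := Nat.le_mul_of_pos_right _ (by omega)
  have hNx : (N : ℤ) < x := by omega
  lift x to ℕ using by omega
  have hxs : x ≤ s := by omega
  have hax : (a * x : ℤ) ≤ a * (s + d + d * b) := by gcongr; omega
  have hyN : (b * N : ℤ) < b * y := by nlinarith
  lift y to ℕ using by nlinarith
  refine ⟨x, y, by omega, hxy, hsparse.apply_eq_of_le_of_lt_mul hs (by omega) hxs ?_ hxt,
    hyt, by exact_mod_cast lt_of_mul_lt_mul_left hyN (by positivity), by linarith,
    by linarith [show (0 : ℤ) ≤ a * x by positivity]⟩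
  have : (s : ℤ) < b * x := by nlinarith
  exact_mod_cast this

theorem SwitchesSparse.exists_solution_above (hsparse : SwitchesSparse φ d t b N)
    (hcop : IsCoprime (a : ℤ) b) (hb : 1 < b) {s : ℕ} (hs : IsSwitch φ d t s)
    (hsN : N + d + d * b * b < s) {P : ℤ} (hP : (d : ℤ) ∣ P - (a + b) * t)
    (hPN : (b * N + a * (s + d + d * b) : ℤ) < P) :
    ∃ x y : ℕ, 0 < x ∧ (a * x + b * y : ℤ) = P ∧ φ x = φ (s + d) ∧ (d : ℤ) ∣ y - t ∧
      N < y ∧ P - a * (s + d + d * b) ≤ (b * y : ℤ) ∧ (b * y : ℤ) ≤ P := by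
  have hd := hs.d_pos
  obtain ⟨x, y, hxy, hxt, hyt, hx₁, hx₂⟩ :=
    exists_mul_add_mul_eq_of_dvd_mem_Ioc hcop hP (by positivity) ((s : ℤ) + d - 1)
  lift x to ℕ using by omega
  have hdb : d * b ≤ d * b * b := Nat.le_mul_of_pos_right _ (by omega)
  have hxs : x ≤ b * s := by
    have : (x : ℤ) ≤ b * s := by nlinarith
    exact_mod_cast this
  have hax : (a * x : ℤ) ≤ a * (s + d + d * b) := by gcongr; omega
  have hyN : (b * N : ℤ) < b * y := by nlinarith
  lift y to ℕ using by nlinarith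
  refine ⟨x, y, by omega, hxy,
    (hsparse.apply_add_eq_of_le_mul hs (by omega) (by omega) hxs hxt).symm, hyt,
    by exact_mod_cast lt_of_mul_lt_mul_left hyN (by positivity), by linarith,
    by linarith [show (0 : ℤ) ≤ a * x by positivity]⟩

theorem SwitchesSparse.exists_balanced_solution_apply_eq (hsparse : SwitchesSparse φ d t b N)
    (hcop : IsCoprime (a : ℤ) b) (hb : 0 < b) {σ : ℕ} (hσ : IsSwitch φ d t σ) {P : ℤ}
    (hP : (d : ℤ) ∣ P - (a + b) * t)
    (hY : (b * (P + a * (d * (a + b))) : ℤ) ≤ (a + b) * (b * σ))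
    (hX : ((a + b) * (b * σ) : ℤ) < b ^ 2 * (P - b * (d * (a + b))))
    (hN : ((a + b) * N : ℤ) < P - b * (d * (a + b))) :
    ∃ x y : ℕ, 0 < x ∧ 0 < y ∧ (a * x + b * y : ℤ) = P ∧ φ x = φ σ ∧ φ y = φ σ := by
  have hd := hσ.d_pos
  obtain ⟨x, y, hxy, hxt, hyt, hle, hlt⟩ :=
    exists_mul_add_mul_eq_of_dvd_le_lt hcop hP (by positivity)
  have hx : P - b * (d * (a + b)) ≤ (a + b) * x := by nlinarith
  have hy : (a + b) * y ≤ P + a * (d * (a + b)) := by nlinarith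
  have hNx : (N : ℤ) < x := lt_of_mul_lt_mul_left (hN.trans_le hx) (by positivity)
  lift x to ℕ using by omega
  lift y to ℕ using by omega
  have hyσ : y ≤ σ := by
    have : ((a + b) * b * y : ℤ) ≤ (a + b) * b * σ := by nlinarith
    exact_mod_cast le_of_mul_le_mul_left this (by positivity)
  have hσx : σ < b * x := by
    have : ((a + b) * b * σ : ℤ) < (a + b) * b * (b * x) := by nlinarith
    exact_mod_cast lt_of_mul_lt_mul_left this (by positivity)
  have hxy' : x ≤ y := by exact_mod_cast hle
  exact ⟨x, y, by omega, by omega, hxy,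
    hsparse.apply_eq_of_le_of_lt_mul hσ (by omega) (hxy'.trans hyσ) hσx hxt,
    hsparse.apply_eq_of_le_of_lt_mul hσ (by omega) hyσ
      (hσx.trans_le (Nat.mul_le_mul_left b hxy')) hyt⟩

theorem exists_mem_monoSolutions_of_forall_ge_not_isSwitch (hcop : IsCoprime (a : ℤ) b)
    (hb : 0 < b) (hd : 0 < d) (hpt : (d : ℤ) ∣ p.eval t - (a + b) * t) {R z : ℕ}
    (hR : ∀ k ≥ R, ¬ IsSwitch φ d t k) (hRz : R < z) (hzt : (d : ℤ) ∣ z - t)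
    (hz : ((a + b) * z + a * (d * b) : ℤ) ≤ p.eval (z : ℤ)) :
    ∃ x y, (x, y, z) ∈ monoSolutions p a b φ := by
  obtain ⟨x, y, hxy, hxt, hyt, hx₁, hx₂⟩ := exists_mul_add_mul_eq_of_dvd_mem_Ioc hcop
    (dvd_eval_sub_mul_of_dvd hzt hpt) (by positivity) ((z : ℤ) - 1)
  lift x to ℕ using by omega
  have hax : (a * x : ℤ) ≤ a * (z - 1 + d * b) := by gcongr
  have hzy : (z : ℤ) ≤ y := le_of_mul_le_mul_left (a := (b : ℤ)) (by nlinarith) (by positivity)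
  lift y to ℕ using by omega
  have hφx := apply_eq_of_forall_ge_not_isSwitch hR hRz hzt hxt (by omega)
  have hφy := apply_eq_of_forall_ge_not_isSwitch hR hRz hzt hyt (by omega)
  exact ⟨x, y, show 0 < x by omega, show 0 < y by omega, show 0 < z by omega,
    hφx.symm.trans hφy, hφx.symm, hxy⟩

end Solutions

section TwoColourings

theorem Fin.eq_or_eq_of_ne {x y : Fin 2} (h : x ≠ y) (z : Fin 2) : z = x ∨ z = y := by omega

variable {p : ℤ[X]} {a b d N : ℕ} {t : ℤ} {φ : ℕ → Fin 2}

theorem SwitchesSparse.exists_mem_monoSolutions_or_exists_isSwitch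
    (hsparse : SwitchesSparse φ d t b N) (hcop : IsCoprime (a : ℤ) b) (hb : 1 < b) {s : ℕ}
    (hs : IsSwitch φ d t s) (hsN : N + d + d * b * b < s)
    (hP₀ : (d : ℤ) ∣ p.eval (s : ℤ) - (a + b) * t)
    (hP₁ : (d : ℤ) ∣ p.eval ((s : ℤ) + d) - (a + b) * t) {m M : ℤ}
    (hm : m ≤ p.eval (s : ℤ) ∧ m ≤ p.eval ((s : ℤ) + d))
    (hM : p.eval (s : ℤ) ≤ M ∧ p.eval ((s : ℤ) + d) ≤ M)
    (hmN : (b * N + a * (s + d + d * b) : ℤ) < m) :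
    (∃ w ∈ monoSolutions p a b φ, s ≤ w.2.2) ∨
      ∃ σ, IsSwitch φ d t σ ∧ (b * σ : ℤ) ∈ Set.Ico (m - a * (s + d + d * b)) M := by
  obtain ⟨x₀, y₀, hx₀, h₀, c₀, hy₀t, hy₀N, hy₀L, hy₀M⟩ :=
    hsparse.exists_solution_below hcop hb hs hsN hP₀ (by linarith)
  by_cases c₀' : φ y₀ = φ s
  · exact .inl ⟨(x₀, y₀, s), ⟨hx₀, Nat.zero_lt_of_lt hy₀N, hs.1, c₀.trans c₀'.symm, c₀, h₀⟩,
      le_rfl⟩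
  obtain ⟨x₁, y₁, hx₁, h₁, c₁, hy₁t, hy₁N, hy₁L, hy₁M⟩ :=
    hsparse.exists_solution_above hcop hb hs hsN hP₁ (by linarith)
  by_cases c₁' : φ y₁ = φ (s + d)
  · exact .inl ⟨(x₁, y₁, s + d), ⟨hx₁, Nat.zero_lt_of_lt hy₁N,
      hs.1.trans_le (Nat.le_add_right _ _), c₁.trans c₁'.symm, c₁, by simpa⟩,
      Nat.le_add_right _ _⟩
  have hy : φ y₀ ≠ φ y₁ := by
    rw [(Fin.eq_or_eq_of_ne hs.2.2 _).resolve_left c₀',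
      (Fin.eq_or_eq_of_ne hs.2.2 _).resolve_right c₁']
    exact hs.2.2.symm
  exact .inr <| exists_isSwitch_mul_mem_Ico (by omega) (Nat.zero_lt_of_lt hy₀N)
    (Nat.zero_lt_of_lt hy₁N) hy₀t hy₁t hy ⟨by linarith, by linarith⟩ ⟨by linarith, by linarith⟩

theorem SwitchesSparse.exists_mem_monoSolutions (hsparse : SwitchesSparse φ d t b N)
    (hcop : IsCoprime (a : ℤ) b) (hb : 1 < b) (hpt : (d : ℤ) ∣ p.eval t - (a + b) * t)
    {s : ℕ} (hs : IsSwitch φ d t s) (hsN : N + d + d * b * b < s) {m M : ℤ}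
    (hm : m ≤ p.eval (s : ℤ) ∧ m ≤ p.eval ((s : ℤ) + d))
    (hM : p.eval (s : ℤ) ≤ M ∧ p.eval ((s : ℤ) + d) ≤ M)
    (h₁ : (b * N + a * (s + d + d * b) : ℤ) < m)
    (h₂ : (b * (M + a * (d * (a + b))) : ℤ) ≤ (a + b) * (m - a * (s + d + d * b)))
    (h₃ : ((a + b) * M : ℤ) ≤ b ^ 2 * (m - b * (d * (a + b))))
    (h₄ : ((a + b) * N + b * (d * (a + b)) : ℤ) < m) :
    ∃ w ∈ monoSolutions p a b φ, s ≤ w.2.2 := by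
  have hP₀ : (d : ℤ) ∣ p.eval (s : ℤ) - (a + b) * t := dvd_eval_sub_mul_of_dvd hs.2.1 hpt
  have hP₁ : (d : ℤ) ∣ p.eval ((s : ℤ) + d) - (a + b) * t :=
    dvd_eval_sub_mul_of_dvd (by simpa [add_sub_right_comm] using dvd_add hs.2.1 dvd_rfl) hpt
  obtain h | ⟨σ, hσ, hσL, hσM⟩ :=
    hsparse.exists_mem_monoSolutions_or_exists_isSwitch hcop hb hs hsN hP₀ hP₁ hm hM h₁
  · exact h
  have hσP : ∀ P : ℤ, m ≤ P → P ≤ M →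
      (b * (P + a * (d * (a + b))) : ℤ) ≤ (a + b) * (b * σ) ∧
      ((a + b) * (b * σ) : ℤ) < b ^ 2 * (P - b * (d * (a + b))) ∧
      ((a + b) * N : ℤ) < P - b * (d * (a + b)) := by
    intro P hmP hPM
    have hbP : (b * P : ℤ) ≤ b * M := by gcongr
    have hσ' : ((a + b) * (m - a * (s + d + d * b)) : ℤ) ≤ (a + b) * (b * σ) := by gcongr
    have hσ'' : ((a + b) * (b * σ) : ℤ) < (a + b) * M := by gcongr
    have hmP : (b ^ 2 * (m - b * (d * (a + b))) : ℤ) ≤ b ^ 2 * (P - b * (d * (a + b))) := by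
      gcongr
    exact ⟨by linarith, by linarith, by linarith⟩
  obtain ⟨hY₀, hX₀, hN₀⟩ := hσP _ hm.1 hM.1
  obtain ⟨hY₁, hX₁, hN₁⟩ := hσP _ hm.2 hM.2
  obtain ⟨X₀, Y₀, hX₀, hY₀, H₀, C₀, D₀⟩ :=
    hsparse.exists_balanced_solution_apply_eq hcop (by omega) hσ hP₀ hY₀ hX₀ hN₀
  obtain ⟨X₁, Y₁, hX₁, hY₁, H₁, C₁, D₁⟩ :=
    hsparse.exists_balanced_solution_apply_eq hcop (by omega) hσ hP₁ hY₁ hX₁ hN₁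
  rcases Fin.eq_or_eq_of_ne hs.2.2 (φ σ) with e | e
  · exact ⟨(X₀, Y₀, s), ⟨hX₀, hY₀, hs.1, C₀.trans D₀.symm, C₀.trans e, H₀⟩, le_rfl⟩
  · exact ⟨(X₁, Y₁, s + d), ⟨hX₁, hY₁, hs.1.trans_le (Nat.le_add_right _ _),
      C₁.trans D₁.symm, C₁.trans e, by simpa⟩, Nat.le_add_right _ _⟩

end TwoColourings

section Infinitude

variable {α : Type*} {p : ℤ[X]} {a b d N : ℕ} {t : ℤ}

theorem exists_mem_monoSolutions_lt_of_eventually_not_isSwitch {φ : ℕ → α}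
    (hdeg : 2 ≤ p.natDegree) (hlc : 0 < p.leadingCoeff) (hcop : IsCoprime (a : ℤ) b)
    (hb : 0 < b) (hd : 0 < d) (hpt : (d : ℤ) ∣ p.eval t - (a + b) * t)
    (hev : ∀ᶠ k in atTop, ¬ IsSwitch φ d t k) (B : ℕ) :
    ∃ w ∈ monoSolutions p a b φ, B < w.2.2 := by
  obtain ⟨R, hR⟩ := eventually_atTop.mp hev
  have hpoly : ∀ᶠ z : ℤ in atTop, ((a + b) * z + a * (d * b) : ℤ) ≤ p.eval z := by
    filter_upwards [eventually_le_mul_eval_add_sub_mul_eval_add hdeg hlc zero_lt_one 0 0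
      (a + b) (a * (d * b))] with z hz
    simpa using hz
  have hev := (eventually_gt_atTop (max R B)).and (tendsto_natCast_atTop_atTop.eventually hpoly)
  obtain ⟨z, hzt, hz, hpz⟩ := ((frequently_atTop_dvd_sub hd t).and_eventually hev).exists
  obtain ⟨x, y, hw⟩ :=
    exists_mem_monoSolutions_of_forall_ge_not_isSwitch hcop hb hd hpt hR (by omega) hzt hpz
  exact ⟨(x, y, z), hw, by simp; omega⟩

variable {φ : ℕ → Fin 2}

theorem SwitchesSparse.exists_mem_monoSolutions_lt_of_frequently
    (hsparse : SwitchesSparse φ d t b N) (hdeg : 2 ≤ p.natDegree) (hlc : 0 < p.leadingCoeff)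
    (ha : 0 < a) (hab : a < b) (hcop : IsCoprime (a : ℤ) b)
    (hpt : (d : ℤ) ∣ p.eval t - (a + b) * t) (hfreq : ∃ᶠ s in atTop, IsSwitch φ d t s)
    (B : ℕ) : ∃ w ∈ monoSolutions p a b φ, B < w.2.2 := by
  have hbb : (a + b : ℤ) < b ^ 2 := by nlinarith
  have key := fun {c c' : ℤ} (hc : c' < c) (g h : ℤ) => tendsto_natCast_atTop_atTop.eventually
    (eventually_le_mul_min_sub_mul_max hdeg hlc hc d g h)
  have hev := ((eventually_gt_atTop (max B (N + d + d * b * b))).and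
    ((key zero_lt_one a (b * N + a * (d + d * b) + 1)).and
    ((key (by omega : (b : ℤ) < a + b) (a * (a + b))
      (b * (a * (d * (a + b))) + (a + b) * (a * (d + d * b)))).and
    ((key hbb 0 (b ^ 2 * (b * (d * (a + b))))).and
    (key zero_lt_one 0 ((a + b) * N + b * (d * (a + b)) + 1))))))
  obtain ⟨s, hs, hsB, e₁, e₂, e₃, e₄⟩ := (hfreq.and_eventually hev).exists
  obtain ⟨w, hw, hsw⟩ := hsparse.exists_mem_monoSolutions hcop (by omega) hpt hs
    (by omega) ⟨min_le_left _ _, min_le_right _ _⟩ ⟨le_max_left _ _, le_max_right _ _⟩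
    (by linarith) (by linarith) (by linarith) (by linarith)
  exact ⟨w, hw, by omega⟩

theorem SwitchesSparse.monoSolutions_infinite (hsparse : SwitchesSparse φ d t b N)
    (hdeg : 2 ≤ p.natDegree) (hlc : 0 < p.leadingCoeff) (ha : 0 < a) (hab : a < b)
    (hcop : Nat.Coprime a b) (hd : 0 < d) (hpt : (d : ℤ) ∣ p.eval t - (a + b) * t) :
    (monoSolutions p a b φ).Infinite := by
  intro hfin
  obtain ⟨B, hB⟩ := (hfin.image fun w => w.2.2).bddAbove
  have hcop' : IsCoprime (a : ℤ) b := Nat.isCoprime_iff_coprime.mpr hcop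
  obtain ⟨w, hw, hBw⟩ : ∃ w ∈ monoSolutions p a b φ, B < w.2.2 := by
    by_cases hfreq : ∃ᶠ s in atTop, IsSwitch φ d t s
    · exact hsparse.exists_mem_monoSolutions_lt_of_frequently hdeg hlc ha hab hcop' hpt
        hfreq B
    · exact exists_mem_monoSolutions_lt_of_eventually_not_isSwitch hdeg hlc hcop' (by omega) hd
        hpt (not_frequently.mp hfreq) B
  exact (hB ⟨w, hw, rfl⟩).not_gt hBw

end Infinitude

/-- **Claim 1.** Let `p ∈ ℤ[z]` have degree at least 2 and positive leading
coefficient, let `a ≠ b` be positive coprime integers and `U = max(a,b)`. Let `d` be a positive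
integer and `t` an integer with `(a+b)·t ≡ p(t) (mod d)`, and let `φ` be a 2-colouring of the
positive integers admitting only finitely many monochromatic solutions of `a·x + b·y = p(z)`.
Calling a positive integer `k ≡ t (mod d)` a `d`-switch when `φ(k) ≠ φ(k+d)`, there are
infinitely many pairs of neighbouring `d`-switches `k₁ < k₂` (no `d`-switch strictly between
them) with `k₂ < U·k₁`. -/
theorem stmt_15 (p : Polynomial ℤ) (hdeg : 2 ≤ p.natDegree) (hlead : 0 < p.leadingCoeff)
    (a b : ℕ) (ha : 0 < a) (hb : 0 < b) (hne : a ≠ b) (hab : Nat.gcd a b = 1)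
    (U : ℕ) (hU : U = max a b)
    (d : ℕ) (hd : 0 < d) (t : ℤ) (ht : (d : ℤ) ∣ p.eval t - ((a : ℤ) + b) * t)
    (φ : ℕ → Fin 2)
    (hfin : {w : ℕ × ℕ × ℕ | 0 < w.1 ∧ 0 < w.2.1 ∧ 0 < w.2.2 ∧
      φ w.1 = φ w.2.1 ∧ φ w.1 = φ w.2.2 ∧
      (a : ℤ) * w.1 + (b : ℤ) * w.2.1 = p.eval (w.2.2 : ℤ)}.Finite)
    (Switch : ℕ → Prop)
    (hSwitch : ∀ k : ℕ, Switch k ↔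
      0 < k ∧ (d : ℤ) ∣ (k : ℤ) - t ∧ φ k ≠ φ (k + d)) :
    ∀ N : ℕ, ∃ k₁ k₂ : ℕ, N < k₁ ∧ k₁ < k₂ ∧ Switch k₁ ∧ Switch k₂ ∧
      (∀ k₃ : ℕ, Switch k₃ → ¬ (k₁ < k₃ ∧ k₃ < k₂)) ∧ k₂ < U * k₁ := by
  intro N
  by_contra hN
  obtain rfl : Switch = IsSwitch φ d t := funext fun k => propext (hSwitch k)
  change (monoSolutions p a b φ).Finite at hfin
  have hsparse : SwitchesSparse φ d t U N := mul_le_of_not_exists_neighbours hN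
  rcases hne.lt_or_gt with hlt | hlt
  · rw [max_eq_right hlt.le] at hU
    subst hU
    exact hsparse.monoSolutions_infinite hdeg hlead ha hlt hab hd ht hfin
  · rw [max_eq_left hlt.le] at hU
    subst hU
    exact hsparse.monoSolutions_infinite hdeg hlead hb hlt (Nat.coprime_comm.mp hab) hd
      (by rwa [add_comm (b : ℤ)]) hfin.monoSolutions_comm
end
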